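/- arXiv:2510.06493 — 4 statements merged into one kernel-verified Lean document; each statement's English description precedes it below -/
import Mathlib

section
/- A'_1 = 1, and for every n ≥ 2 the set P_down(n) of downward patterns of size n occurring in the Sierpiński triangle T has exactly n² − 3n + 4 elements, i.e. A'_n = n² − 3n + 4. -/
/-- Whether the unit triangle at row `r`, column `c` of the Sierpiński triangle is filled:
upward units `(r, 2j)` are filled iff `choose r j` is odd; downward units are unfilled. -/
def filled (r c : ℕ) : Bool :=
  decide (c % 2 = 0 ∧ Nat.choose r (c / 2) % 2 = 1)

/-- The upward pattern of size `n` at upward position `(r, c)`. -/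
def upPattern (n r c : ℕ) : ℕ × ℕ → Bool := fun q =>
  if q.1 < n ∧ q.2 ≤ 2 * q.1 then filled (r + q.1) (c + q.2) else false

/-- The set of all upward patterns of size `n` occurring in the Sierpiński triangle. -/
def Pup (n : ℕ) : Set (ℕ × ℕ → Bool) :=
  { p | ∃ r c : ℕ, c % 2 = 0 ∧ c ≤ 2 * r ∧ p = upPattern n r c }

/-- The downward pattern of size `n` at downward position `(r, c)`. -/
def downPattern (n r c : ℕ) : ℕ × ℕ → Bool := fun q =>
  if q.1 < n ∧ q.2 ≤ 2 * (n - 1 - q.1) then filled (r + q.1) (c + 2 * q.1 + q.2) else false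

/-- The set of all downward patterns of size `n` occurring in the Sierpiński triangle. -/
def Pdown (n : ℕ) : Set (ℕ × ℕ → Bool) :=
  { p | ∃ r c : ℕ, c % 2 = 1 ∧ c + 2 * (n - 1) ≤ 2 * r ∧ p = downPattern n r c }

/-- The top-cut pattern of size `n` at upward position `(r, c)` (apex unit removed). -/
def topCutPattern (n r c : ℕ) : ℕ × ℕ → Bool := fun q =>
  if 1 ≤ q.1 ∧ q.1 < n ∧ q.2 ≤ 2 * q.1 then filled (r + q.1) (c + q.2) else false

/-- The set of all top-cut patterns of size `n` occurring in the Sierpiński triangle. -/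
def PtopCut (n : ℕ) : Set (ℕ × ℕ → Bool) :=
  { p | ∃ r c : ℕ, c % 2 = 0 ∧ c ≤ 2 * r ∧ p = topCutPattern n r c }

/-- The bottom-cut pattern of size `n` at upward position `(r, c)`
(both bottom corner units removed). -/
def botCutPattern (n r c : ℕ) : ℕ × ℕ → Bool := fun q =>
  if (q.1 < n ∧ q.2 ≤ 2 * q.1) ∧ ¬(q.1 = n - 1 ∧ (q.2 = 0 ∨ q.2 = 2 * (n - 1)))
  then filled (r + q.1) (c + q.2) else false

/-- The set of all bottom-cut patterns of size `n` occurring in the Sierpiński triangle. -/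
def PbotCut (n : ℕ) : Set (ℕ × ℕ → Bool) :=
  { p | ∃ r c : ℕ, c % 2 = 0 ∧ c ≤ 2 * r ∧ p = botCutPattern n r c }

/-- The fully-cut pattern of size `n` at upward position `(r, c)`
(all three corner units removed). -/
def fullyCutPattern (n r c : ℕ) : ℕ × ℕ → Bool := fun q =>
  if (q.1 < n ∧ q.2 ≤ 2 * q.1) ∧ q ≠ (0, 0) ∧ ¬(q.1 = n - 1 ∧ (q.2 = 0 ∨ q.2 = 2 * (n - 1)))
  then filled (r + q.1) (c + q.2) else false

/-- The set of all fully-cut patterns of size `n` occurring in the Sierpiński triangle. -/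
def PfullyCut (n : ℕ) : Set (ℕ × ℕ → Bool) :=
  { p | ∃ r c : ℕ, c % 2 = 0 ∧ c ≤ 2 * r ∧ p = fullyCutPattern n r c }

/-- Upward patterns of size `m` occurring inside the approximation `T_N`
(rows `0, …, 2^N - 1`). -/
def PupN (N m : ℕ) : Set (ℕ × ℕ → Bool) :=
  { p | ∃ r c : ℕ, c % 2 = 0 ∧ c ≤ 2 * r ∧ r + m ≤ 2 ^ N ∧ p = upPattern m r c }

/-- Upward patterns of size `n` at positions with `r ≡ ρ [MOD 2]` and `c ≡ γ [MOD 4]`. -/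
def PupRC (n ρ γ : ℕ) : Set (ℕ × ℕ → Bool) :=
  { p | ∃ r c : ℕ, c % 2 = 0 ∧ c ≤ 2 * r ∧ r % 2 = ρ ∧ c % 4 = γ ∧ p = upPattern n r c }

/-- Downward patterns of size `n` at positions with `r ≡ ρ [MOD 2]` and `c ≡ γ [MOD 4]`. -/
def PdownRC (n ρ γ : ℕ) : Set (ℕ × ℕ → Bool) :=
  { p | ∃ r c : ℕ, c % 2 = 1 ∧ c + 2 * (n - 1) ≤ 2 * r ∧ r % 2 = ρ ∧ c % 4 = γ ∧
      p = downPattern n r c }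

/-- Top-cut patterns of size `n` at positions with `r ≡ ρ [MOD 2]` and `c ≡ γ [MOD 4]`. -/
def PtopCutRC (n ρ γ : ℕ) : Set (ℕ × ℕ → Bool) :=
  { p | ∃ r c : ℕ, c % 2 = 0 ∧ c ≤ 2 * r ∧ r % 2 = ρ ∧ c % 4 = γ ∧ p = topCutPattern n r c }

/-- Fully-cut patterns of size `n` at positions with `r ≡ ρ [MOD 2]` and `c ≡ γ [MOD 4]`. -/
def PfullyCutRC (n ρ γ : ℕ) : Set (ℕ × ℕ → Bool) :=
  { p | ∃ r c : ℕ, c % 2 = 0 ∧ c ≤ 2 * r ∧ r % 2 = ρ ∧ c % 4 = γ ∧ p = fullyCutPattern n r c }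

/-- The everywhere-unfilled upward pattern. -/
def blankUp : ℕ × ℕ → Bool := fun _ => false

/-- The upward pattern that is filled exactly at the apex `(0, 0)`. -/
def topUp : ℕ × ℕ → Bool := fun q => decide (q = (0, 0))

/-- The size-`N` upward pattern that is filled exactly at the bottom-left corner `(N-1, 0)`. -/
def botleftUp (N : ℕ) : ℕ × ℕ → Bool := fun q => decide (q = (N - 1, 0))

/-- The size-`N` upward pattern filled exactly at the bottom-right corner `(N-1, 2(N-1))`. -/
def botrightUp (N : ℕ) : ℕ × ℕ → Bool := fun q => decide (q = (N - 1, 2 * (N - 1)))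

/-- The everywhere-unfilled downward pattern. -/
def blankDown : ℕ × ℕ → Bool := fun _ => false

/-- The size-`N` downward pattern filled exactly at the upward units along the top side:
positions `(0, m)` with `m` odd, `1 ≤ m ≤ 2N - 3`. -/
def topsideDown (N : ℕ) : ℕ × ℕ → Bool := fun q =>
  decide (q.1 = 0 ∧ q.2 % 2 = 1 ∧ 1 ≤ q.2 ∧ q.2 ≤ 2 * N - 3)

/-- The size-`N` downward pattern filled exactly at the upward units along the left side:
positions `(k, 1)` with `0 ≤ k ≤ N - 2`. -/
def leftsideDown (N : ℕ) : ℕ × ℕ → Bool := fun q =>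
  decide (q.2 = 1 ∧ q.1 ≤ N - 2)

/-- The size-`N` downward pattern filled exactly at the upward units along the right side:
positions `(k, 2(N-1-k) - 1)` with `0 ≤ k ≤ N - 2`. -/
def rightsideDown (N : ℕ) : ℕ × ℕ → Bool := fun q =>
  decide (q.1 ≤ N - 2 ∧ q.2 = 2 * (N - 1 - q.1) - 1)

/-! A downward pattern of size `n` is determined, through Pascal's rule mod 2, by its top row,
whose upward units read a factor of length `L = n - 1` of a row of Pascal's triangle mod 2; by
Lucas' theorem every such factor also occurs away from the border of the triangle, so `A'_n` is
the number `f L` of these factors. Lucas' theorem also says that row `2r` is row `r` with zeros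
interleaved and row `2r + 1` is row `r` with every letter doubled. Splitting by the parities of
row and first column gives four injections from factors of length about `L / 2` that together
cover all factors of length `L`. Two factors of even rows with different column parities only
share `0⋯0`, two of odd rows only `0⋯0` and `1⋯1`, and an even row and an odd row only share
`0⋯0`, `10⋯0` and `0⋯01`. Hence `f L + 6 = 2 f ⌈L/2⌉ + f ⌊L/2⌋ + f (⌊L/2⌋ + 1)` for `L ≥ 3`,
and `f L = L² - L + 2` follows by induction from `f 1 = 2` and `f 2 = 4`. -/

namespace Choose

theorem choose_pow_mul_add_modEq {p : ℕ} [Fact p.Prime] (a b : ℕ) :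
    ∀ {k r j : ℕ}, r < p ^ k → j < p ^ k →
      (p ^ k * a + r).choose (p ^ k * b + j) ≡ a.choose b * r.choose j [MOD p]
  | 0, r, j, hr, hj => by
    obtain rfl : r = 0 := by simpa using hr
    obtain rfl : j = 0 := by simpa using hj
    simp [Nat.ModEq.refl]
  | k + 1, r, j, hr, hj => by
    have hp : 0 < p := (Fact.out : p.Prime).pos
    have hdiv (c s : ℕ) : (p ^ (k + 1) * c + s) / p = p ^ k * c + s / p := by
      rw [pow_succ, mul_comm (p ^ k) p, mul_assoc, Nat.add_comm, Nat.add_mul_div_left _ _ hp,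
        Nat.add_comm]
    have hmod (c s : ℕ) : (p ^ (k + 1) * c + s) % p = s % p := by
      rw [pow_succ, mul_comm (p ^ k) p, mul_assoc, Nat.mul_add_mod]
    have ih := choose_pow_mul_add_modEq (p := p) a b (k := k) (r := r / p) (j := j / p)
      (Nat.div_lt_of_lt_mul (by rwa [← pow_succ'])) (Nat.div_lt_of_lt_mul (by rwa [← pow_succ']))
    calc (p ^ (k + 1) * a + r).choose (p ^ (k + 1) * b + j)
        ≡ (r % p).choose (j % p) * (p ^ k * a + r / p).choose (p ^ k * b + j / p) [MOD p] := by
          rw [← hdiv a r, ← hdiv b j, ← hmod a r, ← hmod b j]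
          exact choose_modEq_choose_mod_mul_choose_div_nat
      _ ≡ (r % p).choose (j % p) * (a.choose b * (r / p).choose (j / p)) [MOD p] :=
          ih.mul_left _
      _ = a.choose b * ((r % p).choose (j % p) * (r / p).choose (j / p)) := by ring
      _ ≡ a.choose b * r.choose j [MOD p] :=
          (choose_modEq_choose_mod_mul_choose_div_nat (p := p) (n := r) (k := j)).symm.mul_left _

theorem choose_two_mul_add_modEq (a b : ℕ) {ρ σ : ℕ} (hρ : ρ < 2) (hσ : σ < 2) :
    (2 * a + ρ).choose (2 * b + σ) ≡ a.choose b * ρ.choose σ [MOD 2] := by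
  simpa using
    choose_pow_mul_add_modEq (p := 2) a b (k := 1) (by simpa using hρ) (by simpa using hσ)

theorem choose_two_pow_sub_one_mod_two :
    ∀ {B j : ℕ}, j < 2 ^ B → (2 ^ B - 1).choose j % 2 = 1
  | 0, j, hj => by
    obtain rfl : j = 0 := by simpa using hj
    rfl
  | B + 1, j, hj => by
    have hB : 2 ^ (B + 1) - 1 = 2 * (2 ^ B - 1) + 1 := by
      have := Nat.one_le_two_pow (n := B); rw [pow_succ]; omega
    have hj' : j = 2 * (j / 2) + j % 2 := (Nat.div_add_mod j 2).symm
    have h1 : Nat.choose 1 (j % 2) = 1 := by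
      obtain h | h := Nat.mod_two_eq_zero_or_one j <;> simp [h]
    rw [hB, hj', choose_two_mul_add_modEq _ _ one_lt_two (Nat.mod_lt _ two_pos), h1, mul_one]
    exact choose_two_pow_sub_one_mod_two (by rw [pow_succ] at hj; omega)

end Choose

namespace Nat

theorem choose_add_modEq_of_modEq {m r r' : ℕ} :
    ∀ {k s s' : ℕ}, (∀ i ≤ k, r.choose (s + i) ≡ r'.choose (s' + i) [MOD m]) →
      (r + k).choose (s + k) ≡ (r' + k).choose (s' + k) [MOD m]
  | 0, s, s', h => h 0 le_rfl
  | k + 1, s, s', h => by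
    have h₁ := choose_add_modEq_of_modEq (k := k) (s := s) (s' := s') fun i hi => h i (by omega)
    have h₂ := choose_add_modEq_of_modEq (k := k) (s := s + 1) (s' := s' + 1) fun i hi => by
      simpa only [add_assoc, add_comm 1] using h (i + 1) (by omega)
    simp only [← add_assoc, choose_succ_succ']
    rw [add_right_comm s, add_right_comm s']
    exact h₁.add h₂

end Nat

namespace Sierpinski

open Choose

variable {L n : ℕ}

def rowFactor (r s L : ℕ) : Fin L → Bool := fun i => decide (r.choose (s + i) % 2 = 1)

def rowFactors (L : ℕ) : Set (Fin L → Bool) := {w | ∃ r s, rowFactor r s L = w}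

def factorsOfRowParity (L ρ : ℕ) : Set (Fin L → Bool) :=
  {w | ∃ r s, r % 2 = ρ ∧ rowFactor r s L = w}

def factorsOfParity (L ρ σ : ℕ) : Set (Fin L → Bool) :=
  {w | ∃ r s, r % 2 = ρ ∧ s % 2 = σ ∧ rowFactor r s L = w}

def unitWord (L j : ℕ) : Fin L → Bool := fun i => decide ((i : ℕ) = j)

lemma rowFactor_congr {r s r' s' : ℕ}
    (h : ∀ i < L, r.choose (s + i) ≡ r'.choose (s' + i) [MOD 2]) :
    rowFactor r s L = rowFactor r' s' L := by
  funext i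
  simp only [rowFactor, show r.choose (s + i) % 2 = r'.choose (s' + i) % 2 from h i i.2]

lemma rowFactor_of_lt {r s : ℕ} (h : r < s) : rowFactor r s L = ⊥ := by
  funext i
  simp [rowFactor, Nat.choose_eq_zero_of_lt (h.trans_le (Nat.le_add_right s i))]

lemma rowFactor_self (r : ℕ) : rowFactor r r L = unitWord L 0 := by
  funext i
  rcases Nat.eq_zero_or_pos (i : ℕ) with h | h
  · simp [rowFactor, unitWord, h]
  · simp [rowFactor, unitWord, Nat.choose_eq_zero_of_lt (Nat.lt_add_of_pos_right h), h.ne']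

lemma rowFactor_two_pow_sub_one {B s : ℕ} (h : s + L ≤ 2 ^ B) :
    rowFactor (2 ^ B - 1) s L = ⊤ := by
  funext i
  simp [rowFactor, choose_two_pow_sub_one_mod_two (show s + i < 2 ^ B by omega)]

lemma rowFactor_two_pow_add {B ρ : ℕ} (hL : L < 2 ^ B) (hρ : ρ < 2) :
    rowFactor (2 ^ B + ρ) (2 ^ B + 1 - L) L = unitWord L (L - 1) := by
  funext i
  have hρB : ρ < 2 ^ B := by have := i.2; omega
  rcases eq_or_ne (i : ℕ) (L - 1) with hi | hi
  · have h := choose_pow_mul_add_modEq (p := 2) 1 1 hρB (Nat.two_pow_pos B)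
    simp only [mul_one, add_zero, Nat.choose_self, Nat.choose_zero_right] at h
    have h' : (2 ^ B + ρ).choose (2 ^ B) % 2 = 1 := h
    simp [rowFactor, unitWord, hi, show 2 ^ B + 1 - L + (L - 1) = 2 ^ B by omega, h']
  · have hc : 2 ^ B + 1 - L + i < 2 ^ B := by omega
    have h := choose_pow_mul_add_modEq (p := 2) 1 0 hρB hc
    rw [mul_zero, zero_add, mul_one,
      Nat.choose_eq_zero_of_lt (show ρ < 2 ^ B + 1 - L + i by omega), mul_zero] at h
    have h' : (2 ^ B + ρ).choose (2 ^ B + 1 - L + i) % 2 = 0 := h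
    simp [rowFactor, unitWord, hi, h']

lemma exists_rowFactor_eq (r s : ℕ) :
    ∃ R S, 1 ≤ S ∧ S + L ≤ R ∧ rowFactor R S L = rowFactor r s L := by
  obtain ⟨B, hr, hs⟩ : ∃ B, r < 2 ^ B ∧ s + L < 2 ^ B :=
    ⟨r + s + L, by have := Nat.lt_two_pow_self (n := r + s + L); omega,
      by have := Nat.lt_two_pow_self (n := r + s + L); omega⟩
  refine ⟨2 ^ B * 3 + r, 2 ^ B * 1 + s, by omega, by omega, rowFactor_congr fun i hi => ?_⟩
  -- Lucas: from column `2 ^ B` on, row `3 * 2 ^ B + r` repeats row `r`, since `choose 3 1` is odd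
  have h := choose_pow_mul_add_modEq (p := 2) 3 1 hr (show s + i < 2 ^ B by omega)
  rw [add_assoc]
  exact h.trans (by simp [Nat.ModEq, Nat.mul_mod])

lemma rowFactor_two_mul_apply (r s : ℕ) (i : Fin L) :
    rowFactor (2 * r) s L i =
      (decide ((s + i) % 2 = 0) && decide (r.choose ((s + i) / 2) % 2 = 1)) := by
  have h := choose_two_mul_add_modEq r ((s + i) / 2) two_pos (Nat.mod_lt (s + i) two_pos)
  rw [add_zero, Nat.div_add_mod] at h
  simp only [rowFactor, show (2 * r).choose (s + i) % 2 = _ from h]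
  obtain hc | hc := Nat.mod_two_eq_zero_or_one (s + i) <;> simp [hc]

lemma rowFactor_two_mul_add_one_apply (r s : ℕ) (i : Fin L) :
    rowFactor (2 * r + 1) s L i = decide (r.choose ((s + i) / 2) % 2 = 1) := by
  have h := choose_two_mul_add_modEq r ((s + i) / 2) one_lt_two (Nat.mod_lt (s + i) two_pos)
  rw [Nat.div_add_mod] at h
  simp only [rowFactor, show (2 * r + 1).choose (s + i) % 2 = _ from h]
  obtain hc | hc := Nat.mod_two_eq_zero_or_one (s + i) <;> simp [hc]

lemma rowFactor_two_mul_apply_eq_false (r s : ℕ) {i : Fin L} (h : (s + i) % 2 = 1) :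
    rowFactor (2 * r) s L i = false := by
  simp [rowFactor_two_mul_apply, h]

lemma rowFactor_two_mul_add_one_apply_eq {r s : ℕ} {i j : Fin L} (h : (s + i) % 2 = 0)
    (hj : (j : ℕ) = i + 1) : rowFactor (2 * r + 1) s L i = rowFactor (2 * r + 1) s L j := by
  rw [rowFactor_two_mul_add_one_apply, rowFactor_two_mul_add_one_apply,
    show (s + j) / 2 = (s + i) / 2 by omega]

/- Row `2 * r` of Pascal's triangle mod 2 is row `r` with a `0` inserted after every letter
(`spread`), row `2 * r + 1` is row `r` with every letter doubled (`stutter`); the suffix is the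
parity of the first column of the factor. -/
def spreadEven (L : ℕ) (w : Fin ((L + 1) / 2) → Bool) : Fin L → Bool :=
  fun i => if (i : ℕ) % 2 = 0 then w ⟨i / 2, by omega⟩ else false

def spreadOdd (L : ℕ) (w : Fin (L / 2) → Bool) : Fin L → Bool :=
  fun i => if h : (i : ℕ) % 2 = 1 then w ⟨i / 2, by omega⟩ else false

def stutterEven (L : ℕ) (w : Fin ((L + 1) / 2) → Bool) : Fin L → Bool :=
  fun i => w ⟨i / 2, by omega⟩

def stutterOdd (L : ℕ) (w : Fin (L / 2 + 1) → Bool) : Fin L → Bool :=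
  fun i => w ⟨(i + 1) / 2, by omega⟩

lemma spreadEven_injective : Function.Injective (spreadEven L) := by
  intro w w' h
  funext j
  simpa [spreadEven] using congrFun h ⟨2 * j, by omega⟩

lemma spreadOdd_injective : Function.Injective (spreadOdd L) := by
  intro w w' h
  funext j
  have hj : (2 * (j : ℕ) + 1) / 2 = j := by omega
  simpa [spreadOdd, hj] using congrFun h ⟨2 * j + 1, by omega⟩

lemma stutterEven_injective : Function.Injective (stutterEven L) := by
  intro w w' h
  funext j
  simpa [stutterEven] using congrFun h ⟨2 * j, by omega⟩

lemma stutterOdd_injective (hL : 0 < L) : Function.Injective (stutterOdd L) := by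
  intro w w' h
  funext j
  have hj : (2 * (j : ℕ) - 1 + 1) / 2 = j := by omega
  simpa [stutterOdd, hj] using congrFun h ⟨2 * j - 1, by omega⟩

lemma rowFactor_two_mul_two_mul (r s : ℕ) :
    rowFactor (2 * r) (2 * s) L = spreadEven L (rowFactor r s _) := by
  funext i
  rw [rowFactor_two_mul_apply]
  simp only [spreadEven, rowFactor, show (2 * s + i) / 2 = s + i / 2 by omega]
  split_ifs <;> simp_all [Nat.add_mod]

lemma rowFactor_two_mul_two_mul_add_one (r s : ℕ) :
    rowFactor (2 * r) (2 * s + 1) L = spreadOdd L (rowFactor r (s + 1) _) := by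
  funext i
  rw [rowFactor_two_mul_apply]
  simp only [spreadOdd, rowFactor]
  split_ifs with hi
  · simp [show (2 * s + 1 + i) / 2 = s + 1 + i / 2 by omega, Nat.add_mod, hi]
  · simp [Nat.add_mod, Nat.mod_two_ne_one.mp hi]

lemma rowFactor_two_mul_add_one_two_mul (r s : ℕ) :
    rowFactor (2 * r + 1) (2 * s) L = stutterEven L (rowFactor r s _) := by
  funext i
  rw [rowFactor_two_mul_add_one_apply, show (2 * s + i) / 2 = s + i / 2 by omega]
  rfl

lemma rowFactor_two_mul_add_one_two_mul_add_one (r s : ℕ) :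
    rowFactor (2 * r + 1) (2 * s + 1) L = stutterOdd L (rowFactor r s _) := by
  funext i
  rw [rowFactor_two_mul_add_one_apply, show (2 * s + 1 + i) / 2 = s + (i + 1) / 2 by omega]
  rfl

lemma factorsOfParity_zero_zero :
    factorsOfParity L 0 0 = spreadEven L '' rowFactors ((L + 1) / 2) := by
  ext w
  constructor
  · rintro ⟨r, s, hr, hs, rfl⟩
    obtain ⟨r, rfl⟩ : ∃ r', r = 2 * r' := ⟨r / 2, by omega⟩
    obtain ⟨s, rfl⟩ : ∃ s', s = 2 * s' := ⟨s / 2, by omega⟩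
    exact ⟨_, ⟨r, s, rfl⟩, (rowFactor_two_mul_two_mul r s).symm⟩
  · rintro ⟨_, ⟨r, s, rfl⟩, rfl⟩
    exact ⟨2 * r, 2 * s, by omega, by omega, rowFactor_two_mul_two_mul r s⟩

lemma factorsOfParity_zero_one :
    factorsOfParity L 0 1 = spreadOdd L '' rowFactors (L / 2) := by
  ext w
  constructor
  · rintro ⟨r, s, hr, hs, rfl⟩
    obtain ⟨r, rfl⟩ : ∃ r', r = 2 * r' := ⟨r / 2, by omega⟩
    obtain ⟨s, rfl⟩ : ∃ s', s = 2 * s' + 1 := ⟨s / 2, by omega⟩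
    exact ⟨_, ⟨r, s + 1, rfl⟩, (rowFactor_two_mul_two_mul_add_one r s).symm⟩
  · rintro ⟨_, ⟨r, s, rfl⟩, rfl⟩
    obtain ⟨R, S, hS, -, hRS⟩ := exists_rowFactor_eq (L := L / 2) r s
    obtain ⟨S, rfl⟩ : ∃ S', S = S' + 1 := ⟨S - 1, by omega⟩
    exact ⟨2 * R, 2 * S + 1, by omega, by omega, by rw [rowFactor_two_mul_two_mul_add_one, hRS]⟩

lemma factorsOfParity_one_zero :
    factorsOfParity L 1 0 = stutterEven L '' rowFactors ((L + 1) / 2) := by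
  ext w
  constructor
  · rintro ⟨r, s, hr, hs, rfl⟩
    obtain ⟨r, rfl⟩ : ∃ r', r = 2 * r' + 1 := ⟨r / 2, by omega⟩
    obtain ⟨s, rfl⟩ : ∃ s', s = 2 * s' := ⟨s / 2, by omega⟩
    exact ⟨_, ⟨r, s, rfl⟩, (rowFactor_two_mul_add_one_two_mul r s).symm⟩
  · rintro ⟨_, ⟨r, s, rfl⟩, rfl⟩
    exact ⟨2 * r + 1, 2 * s, by omega, by omega, rowFactor_two_mul_add_one_two_mul r s⟩

lemma factorsOfParity_one_one :
    factorsOfParity L 1 1 = stutterOdd L '' rowFactors (L / 2 + 1) := by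
  ext w
  constructor
  · rintro ⟨r, s, hr, hs, rfl⟩
    obtain ⟨r, rfl⟩ : ∃ r', r = 2 * r' + 1 := ⟨r / 2, by omega⟩
    obtain ⟨s, rfl⟩ : ∃ s', s = 2 * s' + 1 := ⟨s / 2, by omega⟩
    exact ⟨_, ⟨r, s, rfl⟩, (rowFactor_two_mul_add_one_two_mul_add_one r s).symm⟩
  · rintro ⟨_, ⟨r, s, rfl⟩, rfl⟩
    exact ⟨2 * r + 1, 2 * s + 1, by omega, by omega,
      rowFactor_two_mul_add_one_two_mul_add_one r s⟩

lemma eq_bot_or_eq_top_of_forall_succ {w : Fin L → Bool} (hL : 0 < L)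
    (h : ∀ i j : Fin L, (j : ℕ) = i + 1 → w i = w j) : w = ⊥ ∨ w = ⊤ := by
  have hconst : ∀ k (hk : k < L), w ⟨k, hk⟩ = w ⟨0, hL⟩ := by
    intro k hk
    induction k with
    | zero => rfl
    | succ k ih => rw [← h ⟨k, by omega⟩ ⟨k + 1, hk⟩ rfl, ih]
  cases h0 : w ⟨0, hL⟩
  · exact .inl <| funext fun k => (hconst k k.2).trans h0
  · exact .inr <| funext fun k => (hconst k k.2).trans h0

lemma eq_bot_or_eq_unitWord {w : Fin L → Bool} {σ τ : ℕ}
    (hvan : ∀ i : Fin L, (σ + i) % 2 = 1 → w i = false)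
    (hpair : ∀ i j : Fin L, (τ + i) % 2 = 0 → (j : ℕ) = i + 1 → w i = w j) :
    w = ⊥ ∨ w = unitWord L 0 ∨ w = unitWord L (L - 1) := by
  -- of two neighbours exactly one lies in the vanishing parity class, so paired letters vanish
  have htrue : ∀ k : Fin L, w k = true →
      (σ + k) % 2 = 0 ∧ ¬((τ + k) % 2 = 0 ∧ k + 1 < L) ∧ ¬((τ + k) % 2 = 1 ∧ 1 ≤ (k : ℕ)) := by
    intro k hk
    have hσ : (σ + k) % 2 = 0 := by
      by_contra h
      simp [hvan k (by omega)] at hk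
    refine ⟨hσ, fun ⟨hτ, hkL⟩ => ?_, fun ⟨hτ, hk1⟩ => ?_⟩
    · have := hpair k ⟨k + 1, hkL⟩ hτ rfl
      simp_all [hvan ⟨k + 1, hkL⟩ (by simp; omega)]
    · have := hpair ⟨k - 1, by omega⟩ k (by simp; omega) (by simp; omega)
      simp_all [hvan ⟨k - 1, by omega⟩ (by simp; omega)]
  by_cases hex : ∃ k, w k = true
  · obtain ⟨k, hk⟩ := hex
    have hw : w = unitWord L k := funext fun k' => by
      have := htrue k hk
      cases hk' : w k'
      · simp only [unitWord, false_eq_decide_iff]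
        rintro h
        rw [Fin.ext h, hk] at hk'
        exact Bool.noConfusion hk'
      · have := htrue k' hk'
        simp only [unitWord, true_eq_decide_iff]
        omega
    have := htrue k hk
    rcases (show (k : ℕ) = 0 ∨ (k : ℕ) = L - 1 by omega) with h | h
    · exact .inr (.inl (h ▸ hw))
    · exact .inr (.inr (h ▸ hw))
  · exact .inl <| funext fun k => by simpa using fun h => hex ⟨k, h⟩

lemma factorsOfRowParity_eq_union (ρ : ℕ) :
    factorsOfRowParity L ρ = factorsOfParity L ρ 0 ∪ factorsOfParity L ρ 1 := by
  ext w
  constructor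
  · rintro ⟨r, s, hr, rfl⟩
    obtain hs | hs := Nat.mod_two_eq_zero_or_one s
    exacts [.inl ⟨r, s, hr, hs, rfl⟩, .inr ⟨r, s, hr, hs, rfl⟩]
  · rintro (⟨r, s, hr, -, rfl⟩ | ⟨r, s, hr, -, rfl⟩) <;> exact ⟨r, s, hr, rfl⟩

lemma rowFactors_eq_union : rowFactors L = factorsOfRowParity L 0 ∪ factorsOfRowParity L 1 := by
  ext w
  constructor
  · rintro ⟨r, s, rfl⟩
    obtain hr | hr := Nat.mod_two_eq_zero_or_one r
    exacts [.inl ⟨r, s, hr, rfl⟩, .inr ⟨r, s, hr, rfl⟩]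
  · rintro (⟨r, s, -, rfl⟩ | ⟨r, s, -, rfl⟩) <;> exact ⟨r, s, rfl⟩

lemma bot_mem_factorsOfParity {ρ σ : ℕ} (hρ : ρ < 2) (hσ : σ < 2) :
    ⊥ ∈ factorsOfParity L ρ σ :=
  ⟨ρ, σ + 2, Nat.mod_eq_of_lt hρ, by omega, rowFactor_of_lt (by omega)⟩

lemma top_mem_factorsOfParity {σ : ℕ} (hσ : σ < 2) : ⊤ ∈ factorsOfParity L 1 σ := by
  have : 2 ^ (L + 1) = 2 * 2 ^ L := pow_succ' 2 L
  have := Nat.lt_two_pow_self (n := L)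
  exact ⟨2 ^ (L + 1) - 1, σ, by omega, Nat.mod_eq_of_lt hσ, rowFactor_two_pow_sub_one (by omega)⟩

lemma factorsOfParity_zero_zero_inter_zero_one :
    factorsOfParity L 0 0 ∩ factorsOfParity L 0 1 = {⊥} := by
  refine Set.Subset.antisymm ?_ (Set.singleton_subset_iff.mpr
    ⟨bot_mem_factorsOfParity two_pos two_pos, bot_mem_factorsOfParity two_pos one_lt_two⟩)
  rintro _ ⟨⟨r, s, hr, hs, rfl⟩, ⟨r', s', hr', hs', hw⟩⟩
  obtain ⟨r, rfl⟩ : ∃ r₀, r = 2 * r₀ := ⟨r / 2, by omega⟩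
  obtain ⟨r', rfl⟩ : ∃ r₀, r' = 2 * r₀ := ⟨r' / 2, by omega⟩
  funext i
  obtain hi | hi := Nat.mod_two_eq_zero_or_one i
  · rw [← hw, rowFactor_two_mul_apply_eq_false r' s' (by omega)]; rfl
  · rw [rowFactor_two_mul_apply_eq_false r s (by omega)]; rfl

lemma factorsOfParity_one_zero_inter_one_one (hL : 0 < L) :
    factorsOfParity L 1 0 ∩ factorsOfParity L 1 1 = {⊥, ⊤} := by
  refine Set.Subset.antisymm ?_ (Set.insert_subset_iff.mpr
    ⟨⟨bot_mem_factorsOfParity one_lt_two two_pos, bot_mem_factorsOfParity one_lt_two one_lt_two⟩,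
      Set.singleton_subset_iff.mpr
        ⟨top_mem_factorsOfParity two_pos, top_mem_factorsOfParity one_lt_two⟩⟩)
  rintro _ ⟨⟨r, s, hr, hs, rfl⟩, ⟨r', s', hr', hs', hw⟩⟩
  obtain ⟨r, rfl⟩ : ∃ r₀, r = 2 * r₀ + 1 := ⟨r / 2, by omega⟩
  obtain ⟨r', rfl⟩ : ∃ r₀, r' = 2 * r₀ + 1 := ⟨r' / 2, by omega⟩
  refine eq_bot_or_eq_top_of_forall_succ hL fun i j hj => ?_
  obtain hi | hi := Nat.mod_two_eq_zero_or_one i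
  · exact rowFactor_two_mul_add_one_apply_eq (by omega) hj
  · rw [← hw]; exact rowFactor_two_mul_add_one_apply_eq (by omega) hj

lemma factorsOfRowParity_zero_inter_one (hL : 2 ≤ L) :
    factorsOfRowParity L 0 ∩ factorsOfRowParity L 1 =
      {⊥, unitWord L 0, unitWord L (L - 1)} := by
  refine Set.Subset.antisymm ?_ ?_
  · rintro _ ⟨⟨r, s, hr, rfl⟩, ⟨r', s', hr', hw⟩⟩
    obtain ⟨r, rfl⟩ : ∃ r₀, r = 2 * r₀ := ⟨r / 2, by omega⟩
    obtain ⟨r', rfl⟩ : ∃ r₀, r' = 2 * r₀ + 1 := ⟨r' / 2, by omega⟩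
    refine eq_bot_or_eq_unitWord (σ := s) (τ := s')
      (fun i hi => rowFactor_two_mul_apply_eq_false r s hi) fun i j hi hj => ?_
    rw [← hw]
    exact rowFactor_two_mul_add_one_apply_eq hi hj
  · have hB := Nat.lt_two_pow_self (n := L)
    have hB2 : 2 ^ L % 2 = 0 := by
      rw [Nat.pow_mod]; simp [show L ≠ 0 by omega]
    rintro _ (rfl | rfl | rfl)
    · exact ⟨⟨0, 1, rfl, rowFactor_of_lt one_pos⟩, ⟨1, 2, rfl, rowFactor_of_lt one_lt_two⟩⟩
    · exact ⟨⟨0, 0, rfl, rowFactor_self 0⟩, ⟨1, 1, rfl, rowFactor_self 1⟩⟩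
    · exact ⟨⟨_, _, by simpa using hB2, rowFactor_two_pow_add hB two_pos⟩,
        ⟨_, _, by omega, rowFactor_two_pow_add hB one_lt_two⟩⟩

lemma bot_ne_unitWord {j : ℕ} (hj : j < L) : (⊥ : Fin L → Bool) ≠ unitWord L j := fun h => by
  simpa [unitWord] using congrFun h ⟨j, hj⟩

lemma ncard_rowFactors_add_six (hL : 3 ≤ L) :
    (rowFactors L).ncard + 6 =
      2 * (rowFactors ((L + 1) / 2)).ncard + (rowFactors (L / 2)).ncard +
        (rowFactors (L / 2 + 1)).ncard := by
  have hbot_top : (⊥ : Fin L → Bool) ≠ ⊤ := fun h => by simpa using congrFun h ⟨0, by omega⟩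
  have hunit : unitWord L 0 ≠ unitWord L (L - 1) := fun h => by
    have := congrFun h ⟨0, by omega⟩
    simp [unitWord] at this
    omega
  have hX := Set.ncard_union_add_ncard_inter (factorsOfParity L 0 0) (factorsOfParity L 0 1)
  have hY := Set.ncard_union_add_ncard_inter (factorsOfParity L 1 0) (factorsOfParity L 1 1)
  have hXY := Set.ncard_union_add_ncard_inter (factorsOfRowParity L 0) (factorsOfRowParity L 1)
  rw [← factorsOfRowParity_eq_union, factorsOfParity_zero_zero_inter_zero_one,
    Set.ncard_singleton, factorsOfParity_zero_zero, factorsOfParity_zero_one,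
    Set.ncard_image_of_injective _ spreadEven_injective,
    Set.ncard_image_of_injective _ spreadOdd_injective] at hX
  rw [← factorsOfRowParity_eq_union, factorsOfParity_one_zero_inter_one_one (by omega),
    Set.ncard_pair hbot_top, factorsOfParity_one_zero, factorsOfParity_one_one,
    Set.ncard_image_of_injective _ stutterEven_injective,
    Set.ncard_image_of_injective _ (stutterOdd_injective (by omega))] at hY
  rw [factorsOfRowParity_zero_inter_one (by omega), ← rowFactors_eq_union,
    Set.ncard_eq_three.mpr
      ⟨_, _, _, bot_ne_unitWord (by omega), bot_ne_unitWord (by omega), hunit, rfl⟩] at hXY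
  omega

lemma rowFactors_eq_univ_of_le_two (hL : L ≤ 2) : rowFactors L = Set.univ := by
  refine Set.eq_univ_of_forall fun w => ?_
  have hw : w = ⊥ ∨ w = ⊤ ∨ w = unitWord L 0 ∨ w = unitWord L (L - 1) := by
    interval_cases L <;> revert w <;> decide
  have hB := Nat.lt_two_pow_self (n := L)
  rcases hw with rfl | rfl | rfl | rfl
  · exact ⟨0, 1, rowFactor_of_lt one_pos⟩
  · exact ⟨_, 0, rowFactor_two_pow_sub_one (B := L) (by omega)⟩
  · exact ⟨0, 0, rowFactor_self 0⟩
  · exact ⟨_, _, rowFactor_two_pow_add hB two_pos⟩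

theorem ncard_rowFactors_add (hL : 1 ≤ L) : (rowFactors L).ncard + L = L ^ 2 + 2 := by
  induction L using Nat.strong_induction_on with
  | _ L ih =>
  rcases (show L = 1 ∨ L = 2 ∨ 3 ≤ L by omega) with rfl | rfl | hL3
  · simp [rowFactors_eq_univ_of_le_two]
  · simp [rowFactors_eq_univ_of_le_two]
  have hrec := ncard_rowFactors_add_six hL3
  have h₁ := ih ((L + 1) / 2) (by omega) (by omega)
  have h₂ := ih (L / 2) (by omega) (by omega)
  have h₃ := ih (L / 2 + 1) (by omega) (by omega)
  obtain ⟨k, rfl | rfl⟩ := Nat.even_or_odd' L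
  · rw [show (2 * k + 1) / 2 = k by omega, show 2 * k / 2 = k by omega] at *
    linarith
  · rw [show (2 * k + 1 + 1) / 2 = k + 1 by omega, show (2 * k + 1) / 2 = k by omega] at *
    linarith

lemma filled_two_mul (r j : ℕ) : filled r (2 * j) = decide (r.choose j % 2 = 1) := by
  simp [filled]

lemma filled_of_mod_two_eq_one {r c : ℕ} (h : c % 2 = 1) : filled r c = false := by
  simp [filled, h]

-- the upward units of the top row of a downward pattern
def topWord (n : ℕ) (p : ℕ × ℕ → Bool) : Fin (n - 1) → Bool := fun i => p (0, 2 * i + 1)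

lemma topWord_downPattern (n r a : ℕ) :
    topWord n (downPattern n r (2 * a + 1)) = rowFactor r (a + 1) (n - 1) := by
  funext i
  have hi := i.2
  simp only [topWord, downPattern, rowFactor]
  rw [if_pos (by omega), show 2 * a + 1 + 2 * 0 + (2 * i + 1) = 2 * (a + 1 + i) by ring, add_zero,
    filled_two_mul]

lemma downPattern_eq_of_rowFactor_eq {r a r' a' : ℕ}
    (h : rowFactor r (a + 1) (n - 1) = rowFactor r' (a' + 1) (n - 1)) :
    downPattern n r (2 * a + 1) = downPattern n r' (2 * a' + 1) := by
  funext ⟨k, m⟩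
  simp only [downPattern]
  split_ifs with hkm
  · obtain ⟨t, rfl | rfl⟩ := Nat.even_or_odd' m
    · rw [filled_of_mod_two_eq_one (by omega), filled_of_mod_two_eq_one (by omega)]
    · have hchoose := Nat.choose_add_modEq_of_modEq (m := 2) (r := r) (r' := r') (k := k)
        (s := a + 1 + t) (s' := a' + 1 + t) fun i hi => by
          have := congrFun h ⟨t + i, by omega⟩
          simp only [rowFactor, decide_eq_decide, ← add_assoc] at this
          unfold Nat.ModEq
          omega
      rw [show 2 * a + 1 + 2 * k + (2 * t + 1) = 2 * (a + 1 + t + k) by ring,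
        show 2 * a' + 1 + 2 * k + (2 * t + 1) = 2 * (a' + 1 + t + k) by ring,
        filled_two_mul, filled_two_mul, show (r + k).choose _ % 2 = _ from hchoose]
  · rfl

lemma injOn_topWord : Set.InjOn (topWord n) (Pdown n) := by
  rintro _ ⟨r, c, hc, -, rfl⟩ _ ⟨r', c', hc', -, rfl⟩ h
  obtain ⟨a, rfl⟩ : ∃ a, c = 2 * a + 1 := ⟨c / 2, by omega⟩
  obtain ⟨a', rfl⟩ : ∃ a, c' = 2 * a + 1 := ⟨c' / 2, by omega⟩
  rw [topWord_downPattern, topWord_downPattern] at h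
  exact downPattern_eq_of_rowFactor_eq h

lemma image_topWord_Pdown : topWord n '' Pdown n = rowFactors (n - 1) := by
  ext w
  constructor
  · rintro ⟨_, ⟨r, c, hc, -, rfl⟩, rfl⟩
    obtain ⟨a, rfl⟩ : ∃ a, c = 2 * a + 1 := ⟨c / 2, by omega⟩
    exact ⟨r, a + 1, (topWord_downPattern n r a).symm⟩
  · rintro ⟨r, s, rfl⟩
    obtain ⟨R, S, hS, hSR, hRS⟩ := exists_rowFactor_eq (L := n - 1) r s
    obtain ⟨a, rfl⟩ : ∃ a, S = a + 1 := ⟨S - 1, by omega⟩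
    exact ⟨_, ⟨R, 2 * a + 1, by omega, by omega, rfl⟩, by rw [topWord_downPattern, hRS]⟩

lemma ncard_Pdown (n : ℕ) : (Pdown n).ncard = (rowFactors (n - 1)).ncard := by
  rw [← image_topWord_Pdown, injOn_topWord.ncard_image]

lemma Pdown_finite (n : ℕ) : (Pdown n).Finite :=
  (Set.toFinite (topWord n '' Pdown n)).of_finite_image injOn_topWord

end Sierpinski

theorem sierpinski_down_count :
    (Pdown 1).ncard = 1 ∧
    ∀ n : ℕ, 2 ≤ n →
      (Pdown n).Finite ∧ ((Pdown n).ncard : ℤ) = (n : ℤ) ^ 2 - 3 * n + 4 := by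
  refine ⟨by simp [Sierpinski.ncard_Pdown, Sierpinski.rowFactors_eq_univ_of_le_two],
    fun n hn => ⟨Sierpinski.Pdown_finite n, ?_⟩⟩
  obtain ⟨L, rfl⟩ : ∃ L, n = L + 1 := ⟨n - 1, by omega⟩
  have h := Sierpinski.ncard_rowFactors_add (L := L) (by omega)
  rw [Sierpinski.ncard_Pdown, Nat.add_sub_cancel]
  push_cast
  linarith
end

section
/- For every n ≥ 2, A_n = C_{n+1} and B_n = D_{n+1}; that is, the number of upward patterns of size n in T equals the number of bottom-cut patterns of size n+1 in T, and the number of top-cut patterns of size n in T equals the number of fully-cut patterns of size n+1 in T. -/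
/-! ### Auxiliary lemmas -/

lemma filled_of_odd (r c : ℕ) (h : c % 2 = 1) : filled r c = false := by
  simp only [filled, decide_eq_false_iff_not]
  rintro ⟨h1, -⟩; omega

lemma filled_succ (r j : ℕ) :
    filled (r + 1) (2 * (j + 1)) = xor (filled r (2 * (j + 1))) (filled r (2 * j)) := by
  have e1 : (2 * (j + 1)) % 2 = 0 := by omega
  have e2 : (2 * (j + 1)) / 2 = j + 1 := by omega
  have e3 : (2 * j) % 2 = 0 := by omega
  have e4 : (2 * j) / 2 = j := by omega
  have hch : Nat.choose (r + 1) (j + 1) = Nat.choose r j + Nat.choose r (j + 1) :=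
    Nat.choose_succ_succ r j
  simp only [filled, e1, e2, e3, e4, hch, true_and]
  rcases Nat.mod_two_eq_zero_or_one (Nat.choose r j) with h1 | h1 <;>
    rcases Nat.mod_two_eq_zero_or_one (Nat.choose r (j + 1)) with h2 | h2 <;>
      simp [Nat.add_mod, h1, h2]

lemma rowDet (n r c r' c' : ℕ) (hc : c % 2 = 0) (hc' : c' % 2 = 0) (hn : 1 ≤ n)
    (h : ∀ m, m ≤ 2 * (n - 1) → filled (r + (n - 1)) (c + m) = filled (r' + (n - 1)) (c' + m))
    (m : ℕ) (hm0 : m ≠ 0) (hm2 : m ≠ 2 * n) (hmle : m ≤ 2 * n) :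
    filled (r + n) (c + m) = filled (r' + n) (c' + m) := by
  rcases Nat.even_or_odd m with he | ho
  · obtain ⟨k, hk⟩ := he
    obtain ⟨i, hi⟩ : ∃ i, m = 2 * (i + 1) := ⟨k - 1, by omega⟩
    obtain ⟨a, ha⟩ : ∃ a, c = 2 * a := ⟨c / 2, by omega⟩
    obtain ⟨a', ha'⟩ : ∃ a', c' = 2 * a' := ⟨c' / 2, by omega⟩
    have h1 := h m (by omega)
    have h2 := h (m - 2) (by omega)
    rw [show r + n = (r + (n - 1)) + 1 by omega, show r' + n = (r' + (n - 1)) + 1 by omega,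
        show c + m = 2 * ((a + i) + 1) by omega, show c' + m = 2 * ((a' + i) + 1) by omega,
        filled_succ, filled_succ,
        show 2 * ((a + i) + 1) = c + m by omega, show 2 * (a + i) = c + (m - 2) by omega,
        show 2 * ((a' + i) + 1) = c' + m by omega, show 2 * (a' + i) = c' + (m - 2) by omega,
        h1, h2]
  · obtain ⟨k, hk⟩ := ho
    rw [filled_of_odd _ _ (by omega), filled_of_odd _ _ (by omega)]

lemma up_eq_filled (n r c k m : ℕ) (h1 : k < n) (h2 : m ≤ 2 * k) :
    upPattern n r c (k, m) = filled (r + k) (c + m) := if_pos ⟨h1, h2⟩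

lemma top_eq_filled (n r c k m : ℕ) (h0 : 1 ≤ k) (h1 : k < n) (h2 : m ≤ 2 * k) :
    topCutPattern n r c (k, m) = filled (r + k) (c + m) := if_pos ⟨h0, h1, h2⟩

/-- restriction to the first `n` rows -/
def restrU (n : ℕ) (p : ℕ × ℕ → Bool) : ℕ × ℕ → Bool := fun q =>
  if q.1 < n ∧ q.2 ≤ 2 * q.1 then p q else false

/-- restriction to rows `1, …, n-1` -/
def restrT (n : ℕ) (p : ℕ × ℕ → Bool) : ℕ × ℕ → Bool := fun q =>
  if 1 ≤ q.1 ∧ q.1 < n ∧ q.2 ≤ 2 * q.1 then p q else false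

lemma restr_bot (n r c : ℕ) : restrU n (botCutPattern (n + 1) r c) = upPattern n r c := by
  funext q
  obtain ⟨k, m⟩ := q
  simp only [restrU, botCutPattern, upPattern]
  by_cases h : k < n ∧ m ≤ 2 * k
  · rw [if_pos h, if_pos (show k < n ∧ m ≤ 2 * k from h),
      if_pos (show (k < n + 1 ∧ m ≤ 2 * k) ∧
        ¬(k = n + 1 - 1 ∧ (m = 0 ∨ m = 2 * (n + 1 - 1))) from
        ⟨⟨by omega, h.2⟩, by rintro ⟨h1, -⟩; omega⟩)]
  · rw [if_neg h, if_neg (show ¬(k < n ∧ m ≤ 2 * k) from h)]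

lemma restr_top (n r c : ℕ) (hn : 1 ≤ n) :
    restrT n (fullyCutPattern (n + 1) r c) = topCutPattern n r c := by
  funext q
  obtain ⟨k, m⟩ := q
  simp only [restrT, fullyCutPattern, topCutPattern]
  by_cases h : 1 ≤ k ∧ k < n ∧ m ≤ 2 * k
  · have hne : (k, m) ≠ ((0 : ℕ), (0 : ℕ)) := by
      simp only [ne_eq, Prod.mk.injEq, not_and]; omega
    rw [if_pos h, if_pos (show 1 ≤ k ∧ k < n ∧ m ≤ 2 * k from h),
      if_pos (show (k < n + 1 ∧ m ≤ 2 * k) ∧ (k, m) ≠ (0, 0) ∧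
        ¬(k = n + 1 - 1 ∧ (m = 0 ∨ m = 2 * (n + 1 - 1))) from
        ⟨⟨by omega, h.2.2⟩, hne, by rintro ⟨h1, -⟩; omega⟩)]
  · rw [if_neg h, if_neg (show ¬(1 ≤ k ∧ k < n ∧ m ≤ 2 * k) from h)]

lemma img_bot (n : ℕ) : restrU n '' PbotCut (n + 1) = Pup n := by
  ext p
  constructor
  · rintro ⟨q, ⟨r, c, hc, hcr, rfl⟩, rfl⟩
    exact ⟨r, c, hc, hcr, (restr_bot n r c)⟩
  · rintro ⟨r, c, hc, hcr, rfl⟩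
    exact ⟨botCutPattern (n + 1) r c, ⟨r, c, hc, hcr, rfl⟩, restr_bot n r c⟩

lemma img_top (n : ℕ) (hn : 1 ≤ n) : restrT n '' PfullyCut (n + 1) = PtopCut n := by
  ext p
  constructor
  · rintro ⟨q, ⟨r, c, hc, hcr, rfl⟩, rfl⟩
    exact ⟨r, c, hc, hcr, (restr_top n r c hn)⟩
  · rintro ⟨r, c, hc, hcr, rfl⟩
    exact ⟨fullyCutPattern (n + 1) r c, ⟨r, c, hc, hcr, rfl⟩, restr_top n r c hn⟩

lemma inj_bot (n : ℕ) (hn : 2 ≤ n) : Set.InjOn (restrU n) (PbotCut (n + 1)) := by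
  rintro p ⟨r, c, hc, hcr, rfl⟩ p' ⟨r', c', hc', hcr', rfl⟩ hpe
  rw [restr_bot n r c, restr_bot n r' c'] at hpe
  have hrow : ∀ m, m ≤ 2 * (n - 1) →
      filled (r + (n - 1)) (c + m) = filled (r' + (n - 1)) (c' + m) := by
    intro m hm
    have h := congrFun hpe (n - 1, m)
    rwa [up_eq_filled n r c (n - 1) m (by omega) (by omega),
      up_eq_filled n r' c' (n - 1) m (by omega) (by omega)] at h
  funext q
  obtain ⟨k, m⟩ := q
  simp only [botCutPattern]
  by_cases H : (k < n + 1 ∧ m ≤ 2 * k) ∧ ¬(k = n + 1 - 1 ∧ (m = 0 ∨ m = 2 * (n + 1 - 1)))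
  · rw [if_pos H, if_pos H]
    rcases Nat.lt_or_ge k n with hk | hk
    · have h := congrFun hpe (k, m)
      rwa [up_eq_filled n r c k m hk H.1.2, up_eq_filled n r' c' k m hk H.1.2] at h
    · have hkn : k = n := by omega
      rw [hkn]
      exact rowDet n r c r' c' hc hc' (by omega) hrow m
        (fun h0 => H.2 ⟨by omega, Or.inl h0⟩)
        (fun h2 => H.2 ⟨by omega, Or.inr (by omega)⟩) (by omega)
  · rw [if_neg H, if_neg H]

lemma inj_top (n : ℕ) (hn : 2 ≤ n) : Set.InjOn (restrT n) (PfullyCut (n + 1)) := by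
  rintro p ⟨r, c, hc, hcr, rfl⟩ p' ⟨r', c', hc', hcr', rfl⟩ hpe
  rw [restr_top n r c (by omega), restr_top n r' c' (by omega)] at hpe
  have hrow : ∀ m, m ≤ 2 * (n - 1) →
      filled (r + (n - 1)) (c + m) = filled (r' + (n - 1)) (c' + m) := by
    intro m hm
    have h := congrFun hpe (n - 1, m)
    rwa [top_eq_filled n r c (n - 1) m (by omega) (by omega) (by omega),
      top_eq_filled n r' c' (n - 1) m (by omega) (by omega) (by omega)] at h
  funext q
  obtain ⟨k, m⟩ := q
  simp only [fullyCutPattern]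
  by_cases H : (k < n + 1 ∧ m ≤ 2 * k) ∧ (k, m) ≠ ((0 : ℕ), (0 : ℕ)) ∧
      ¬(k = n + 1 - 1 ∧ (m = 0 ∨ m = 2 * (n + 1 - 1)))
  · rw [if_pos H, if_pos H]
    have hk1 : 1 ≤ k := by
      by_contra hk0
      have hk : k = 0 := by omega
      have hm : m = 0 := by have := H.1.2; omega
      exact H.2.1 (by rw [hk, hm])
    rcases Nat.lt_or_ge k n with hk | hk
    · have h := congrFun hpe (k, m)
      rwa [top_eq_filled n r c k m hk1 hk H.1.2, top_eq_filled n r' c' k m hk1 hk H.1.2] at h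
    · have hkn : k = n := by omega
      rw [hkn]
      exact rowDet n r c r' c' hc hc' (by omega) hrow m
        (fun h0 => H.2.2 ⟨by omega, Or.inl h0⟩)
        (fun h2 => H.2.2 ⟨by omega, Or.inr (by omega)⟩) (by omega)
  · rw [if_neg H, if_neg H]

theorem sierpinski_A_eq_C_and_B_eq_D (n : ℕ) (hn : 2 ≤ n) :
    (Pup n).ncard = (PbotCut (n + 1)).ncard ∧
    (PtopCut n).ncard = (PfullyCut (n + 1)).ncard := by
  constructor
  · rw [← img_bot n, Set.ncard_image_of_injOn (inj_bot n hn)]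
  · rw [← img_top n (by omega : 1 ≤ n), Set.ncard_image_of_injOn (inj_top n hn)]
end

section
/- For every n ≥ 2, A'_{2n} = A_n and A'_{2n−1} = B_n; that is, the number of downward patterns of size 2n in T equals the number of upward patterns of size n in T, and the number of downward patterns of size 2n−1 in T equals the number of top-cut patterns of size n in T. -/
/-!
Mod 2, Pascal's rule computes each entry of row `r + k` from the `k + 1` entries of row `r`
above it. Conversely, since two consecutive entries of row `r` add up to an entry of row `r + 1`,
a stretch of row `r + 1` together with one entry of row `r` recovers the entries of row `r`
around it. Hence a downward pattern of size `m` and the window of `m - 1` upward units along its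
top side determine each other; an upward pattern of size `n` likewise corresponds to the window
of `2n - 1` entries of its top row centred at its apex, and a top-cut pattern to the window of
`2n - 2` entries of its second row. Lucas' theorem shows that every window of Pascal's triangle
mod 2, even one hanging over its left edge, reappears strictly inside a later row, where the top
sides of downward patterns live. So `Pdown (2n)` and `Pup n` are both counted by interior windows
of length `2n - 1`, and `Pdown (2n - 1)` and `PtopCut n` by those of length `2n - 2`.
-/

section PascalArray

variable {G : Type*} [AddCommGroup G] {v w : ℕ → ℤ → G}

def IsPascal (v : ℕ → ℤ → G) : Prop :=
  ∀ k x, v (k + 1) (x + 1) = v k x + v k (x + 1)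

lemma IsPascal.sub (hv : IsPascal v) (hw : IsPascal w) : IsPascal (v - w) := by
  intro k x
  simp only [Pi.sub_apply, hv k x, hw k x]
  abel

lemma IsPascal.eq_zero_of_row_eq_zero (hv : IsPascal v) {k : ℕ} {x : ℤ}
    (h : ∀ i : ℕ, i ≤ k → v 0 (x - i) = 0) : v k x = 0 := by
  induction k generalizing x with
  | zero => simpa using h 0 le_rfl
  | succ k ih =>
    have hx := hv k (x - 1)
    rw [sub_add_cancel] at hx
    rw [hx, ih fun i hi => by simpa [sub_sub, add_comm] using h (i + 1) (by omega),
      ih fun i hi => h i (by omega), add_zero]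

lemma eq_zero_of_add_succ_eq_zero {u : ℤ → G} {a b x₀ : ℤ} (ha : a ≤ x₀) (hb : x₀ ≤ b)
    (h₀ : u x₀ = 0) (h : ∀ x, a ≤ x → x < b → u x + u (x + 1) = 0) {x : ℤ} (hax : a ≤ x)
    (hxb : x ≤ b) : u x = 0 := by
  rcases le_total x₀ x with hx | hx
  · induction x, hx using Int.leInduction with
    | base => exact h₀
    | succ y hy ih => simpa [ih (by omega) (by omega)] using h y (by omega) (by omega)
  · induction x, hx using Int.leInductionDown with
    | base => exact h₀
    | pred y hy ih => simpa [ih (by omega) (by omega)] using h (y - 1) (by omega) (by omega)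

lemma IsPascal.row_eq_zero_of_trapezoid (hv : IsPascal v) {κ δ : ℕ}
    (h : ∀ k ≤ κ, ∀ j : ℕ, j ≤ k + δ → v k j = 0) {x : ℤ} (hx₁ : -κ ≤ x) (hx₂ : x ≤ κ + δ) :
    v 0 x = 0 := by
  induction κ generalizing δ v x with
  | zero =>
    lift x to ℕ using by omega
    exact h 0 le_rfl x (by omega)
  | succ κ ih =>
    have row₁ : ∀ y : ℤ, -κ ≤ y → y ≤ κ + (δ + 1 : ℕ) → v 1 y = 0 := fun y hy₁ hy₂ =>
      ih (v := fun k => v (k + 1)) (fun k => hv (k + 1))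
        (fun k hk j hj => h (k + 1) (by omega) j (by omega)) hy₁ hy₂
    exact eq_zero_of_add_succ_eq_zero (x₀ := 0) (by omega) (by omega)
      (h 0 (Nat.zero_le _) 0 (Nat.zero_le _))
      (fun y hy₁ hy₂ => by rw [← hv 0 y, row₁ _ (by omega) (by omega)]) hx₁ hx₂

lemma IsPascal.trapezoid_eq_zero_iff (hv : IsPascal v) (κ δ : ℕ) :
    (∀ k ≤ κ, ∀ j : ℕ, j ≤ k + δ → v k j = 0) ↔
      ∀ x : ℤ, -κ ≤ x → x ≤ κ + δ → v 0 x = 0 :=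
  ⟨fun h _ => hv.row_eq_zero_of_trapezoid h, fun h _ hk _ hj =>
    hv.eq_zero_of_row_eq_zero fun _ hi => h _ (by omega) (by omega)⟩

end PascalArray

def pascal (r : ℕ) : ℤ → ZMod 2
  | .ofNat x => r.choose x
  | .negSucc _ => 0

@[simp]
lemma pascal_natCast (r x : ℕ) : pascal r x = r.choose x := rfl

lemma pascal_of_neg (r : ℕ) {x : ℤ} (hx : x < 0) : pascal r x = 0 := by
  rcases x with x | x
  · rw [Int.ofNat_eq_natCast] at hx
    omega
  · rfl

lemma pascal_succ_succ (r : ℕ) (x : ℤ) :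
    pascal (r + 1) (x + 1) = pascal r x + pascal r (x + 1) := by
  rcases x with x | _ | x
  · simp only [Int.ofNat_eq_natCast, ← Nat.cast_succ, pascal_natCast, Nat.choose_succ_succ',
      Nat.cast_add]
  · rw [show Int.negSucc 0 = -1 from rfl, neg_add_cancel, pascal_of_neg r (x := -1) (by omega),
      zero_add, ← Nat.cast_zero, pascal_natCast, pascal_natCast, Nat.choose_zero_right,
      Nat.choose_zero_right]
  · rw [pascal_of_neg _ (by omega), pascal_of_neg _ (by omega), pascal_of_neg _ (by omega),
      add_zero]

lemma isPascal_pascal (r : ℕ) (a : ℤ) : IsPascal fun k x => pascal (r + k) (a + x) := by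
  intro k x
  simp only [← add_assoc, pascal_succ_succ]

def rowWindow (r : ℕ) (a : ℤ) (L : ℕ) : Fin L → ZMod 2 := fun t => pascal r (a + t)

lemma rowWindow_eq_iff {r r' L : ℕ} {a a' : ℤ} :
    rowWindow r a L = rowWindow r' a' L ↔
      ∀ t : ℕ, t < L → pascal r (a + t) = pascal r' (a' + t) :=
  funext_iff.trans ⟨fun h t ht => h ⟨t, ht⟩, fun h t => h t t.isLt⟩

lemma pascal_trapezoid_eq_iff (r r' : ℕ) (a a' : ℤ) (κ δ : ℕ) :
    (∀ k ≤ κ, ∀ j : ℕ, j ≤ k + δ → pascal (r + k) (a + j) = pascal (r' + k) (a' + j)) ↔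
      rowWindow r (a - κ) (2 * κ + δ + 1) = rowWindow r' (a' - κ) (2 * κ + δ + 1) := by
  have key := ((isPascal_pascal r a).sub (isPascal_pascal r' a')).trapezoid_eq_zero_iff κ δ
  simp only [Pi.sub_apply, sub_eq_zero, add_zero] at key
  rw [key, rowWindow_eq_iff]
  constructor
  · intro h t ht
    convert h (t - κ) (by omega) (by omega) using 2 <;> ring
  · intro h x hx₁ hx₂
    obtain ⟨t, rfl⟩ : ∃ t : ℕ, x = t - κ := ⟨(x + κ).toNat, by omega⟩
    convert h t (by omega) using 2 <;> ring

lemma pascal_downTriangle_eq_iff (r r' : ℕ) (a a' : ℤ) (L : ℕ) :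
    (∀ k x : ℕ, k ≤ x → x < L → pascal (r + k) (a + x) = pascal (r' + k) (a' + x)) ↔
      rowWindow r a L = rowWindow r' a' L := by
  rw [rowWindow_eq_iff]
  refine ⟨fun h t ht => by simpa using h 0 t (Nat.zero_le t) ht, fun h k x hkx hx => ?_⟩
  rw [← sub_eq_zero]
  refine ((isPascal_pascal r a).sub (isPascal_pascal r' a')).eq_zero_of_row_eq_zero
    (k := k) (x := x) fun i hi => ?_
  simpa [sub_eq_zero, ← Nat.cast_sub (hi.trans hkx), add_sub_assoc] using h (x - i) (by omega)

lemma choose_two_pow_mul_add (K : ℕ) {a b R y : ℕ} (hR : R < 2 ^ K) (hy : y < 2 ^ K) :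
    ((2 ^ K * a + R).choose (2 ^ K * b + y) : ZMod 2) = a.choose b * R.choose y := by
  have lucas (m l : ℕ) :
      (m.choose l : ZMod 2) = (m % 2).choose (l % 2) * (m / 2).choose (l / 2) := by
    have h := Choose.choose_modEq_choose_mod_mul_choose_div (n := m) (k := l) (p := 2)
    rw [← ZMod.intCast_eq_intCast_iff] at h
    exact_mod_cast h
  induction K generalizing R y with
  | zero =>
    obtain rfl : R = 0 := by simpa using hR
    obtain rfl : y = 0 := by simpa using hy
    simp
  | succ K ih =>
    have hpow : 2 ^ (K + 1) = 2 * 2 ^ K := pow_succ' 2 K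
    have split (m x : ℕ) : 2 ^ (K + 1) * m + x = 2 * (2 ^ K * m + x / 2) + x % 2 := by
      rw [hpow, mul_assoc]
      omega
    rw [lucas, split, split, Nat.mul_add_mod_self_left, Nat.mul_add_mod_self_left,
      Nat.mul_add_div two_pos, Nat.mul_add_div two_pos, Nat.mod_div_self, Nat.mod_div_self,
      add_zero, add_zero, ih (by omega) (by omega), lucas R y, Nat.mod_mod, Nat.mod_mod]
    ring

/-- With `P = 2 ^ K` large, Lucas' theorem gives `choose (6P + R) (2P + y) ≡ choose R y` and
`choose (6P + R) (P + y) ≡ 0` for `0 ≤ y < P`, since `choose 6 2` is odd and `choose 6 1` even. -/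
lemma exists_rowWindow_eq_interior (R : ℕ) (a : ℤ) (L : ℕ) :
    ∃ r e : ℕ, 1 ≤ e ∧ e + L ≤ r ∧ rowWindow r e L = rowWindow R a L := by
  set K := R + L + a.natAbs
  have hK : K < 2 ^ K := Nat.lt_two_pow_self
  set P := 2 ^ K
  refine ⟨P * 6 + R, (2 * P + a).toNat, by omega, by omega, rowWindow_eq_iff.mpr fun t ht => ?_⟩
  rcases lt_or_ge (a + t) 0 with hneg | hnonneg
  · obtain ⟨y, hy, hyP⟩ : ∃ y : ℕ, ((2 * P + a).toNat + t : ℤ) = (P * 1 + y : ℕ) ∧ y < P :=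
      ⟨(P + a + t).toNat, by omega, by omega⟩
    rw [hy, pascal_of_neg R hneg, pascal_natCast, choose_two_pow_mul_add K (by omega) hyP,
      Nat.choose_one_right, show ((6 : ℕ) : ZMod 2) = 0 by decide, zero_mul]
  · obtain ⟨y, hy, hyP⟩ : ∃ y : ℕ, a + t = y ∧ y < P :=
      ⟨(a + t).toNat, by omega, by omega⟩
    rw [show ((2 * P + a).toNat + t : ℤ) = (P * 2 + y : ℕ) by omega, hy, pascal_natCast,
      pascal_natCast, choose_two_pow_mul_add K (by omega) hyP,
      show ((Nat.choose 6 2 : ℕ) : ZMod 2) = 1 by decide, one_mul]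

def interiorWindows (L : ℕ) : Set (Fin L → ZMod 2) :=
  (fun q : ℕ × ℕ => rowWindow q.1 q.2 L) '' {q | 1 ≤ q.2 ∧ q.2 + L ≤ q.1}

lemma image_rowWindow_eq_interiorWindows {L : ℕ} (κ ρ : ℕ) (h : κ + ρ < L) :
    (fun q : ℕ × ℕ => rowWindow (q.1 + ρ) (q.2 - κ : ℤ) L) '' {q | q.2 ≤ q.1} =
      interiorWindows L := by
  ext w
  constructor
  · rintro ⟨q, -, rfl⟩
    obtain ⟨r, e, he, hr, hw⟩ := exists_rowWindow_eq_interior (q.1 + ρ) (q.2 - κ) L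
    exact ⟨(r, e), ⟨he, hr⟩, hw⟩
  · rintro ⟨⟨r, e⟩, ⟨he, hr⟩, rfl⟩
    refine ⟨(r - ρ, e + κ), show e + κ ≤ r - ρ by omega, ?_⟩
    dsimp only
    congr 1
    · omega
    · push_cast
      ring

lemma filled_two_mul_eq_iff {r r' x x' : ℕ} :
    filled r (2 * x) = filled r' (2 * x') ↔ pascal r x = pascal r' x' := by
  simp only [filled, Nat.mul_mod_right, Nat.mul_div_cancel_left _ two_pos, true_and,
    decide_eq_decide, pascal_natCast, ZMod.natCast_eq_natCast_iff']
  omega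

lemma filled_two_mul_add_one (r x : ℕ) : filled r (2 * x + 1) = false := by
  simp [filled]

lemma upPattern_eq_iff {n : ℕ} (hn : 1 ≤ n) (R J R' J' : ℕ) :
    upPattern n R (2 * J) = upPattern n R' (2 * J') ↔
      rowWindow R (J - (n - 1 : ℕ)) (2 * n - 1) =
        rowWindow R' (J' - (n - 1 : ℕ)) (2 * n - 1) := by
  have key := pascal_trapezoid_eq_iff R R' J J' (n - 1) 0
  rw [show 2 * (n - 1) + 0 + 1 = 2 * n - 1 by omega] at key
  rw [← key, funext_iff]
  constructor
  · intro h k hk j hj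
    have hkj := h (k, 2 * j)
    simp only [upPattern, if_pos (show k < n ∧ 2 * j ≤ 2 * k by omega), ← mul_add,
      filled_two_mul_eq_iff] at hkj
    exact_mod_cast hkj
  · rintro h ⟨k, m⟩
    simp only [upPattern]
    split_ifs with hkm
    · obtain ⟨j, rfl | rfl⟩ := Nat.even_or_odd' m
      · rw [← mul_add, ← mul_add, filled_two_mul_eq_iff]
        exact_mod_cast h k (by omega) j (by omega)
      · simp only [← add_assoc, ← mul_add, filled_two_mul_add_one]
    · rfl

lemma topCutPattern_eq_iff {n : ℕ} (hn : 2 ≤ n) (R J R' J' : ℕ) :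
    topCutPattern n R (2 * J) = topCutPattern n R' (2 * J') ↔
      rowWindow (R + 1) (J - (n - 2 : ℕ)) (2 * n - 2) =
        rowWindow (R' + 1) (J' - (n - 2 : ℕ)) (2 * n - 2) := by
  have key := pascal_trapezoid_eq_iff (R + 1) (R' + 1) J J' (n - 2) 1
  rw [show 2 * (n - 2) + 1 + 1 = 2 * n - 2 by omega] at key
  rw [← key, funext_iff]
  constructor
  · intro h k hk j hj
    have hkj := h (k + 1, 2 * j)
    simp only [topCutPattern, ← mul_add, filled_two_mul_eq_iff, ← add_assoc,
      if_pos (show 1 ≤ k + 1 ∧ k + 1 < n ∧ 2 * j ≤ 2 * (k + 1) by omega)] at hkj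
    rw [add_right_comm R, add_right_comm R']
    exact_mod_cast hkj
  · rintro h ⟨_ | k, m⟩
    · rfl
    simp only [topCutPattern]
    split_ifs with hkm
    · obtain ⟨j, rfl | rfl⟩ := Nat.even_or_odd' m
      · rw [← mul_add, ← mul_add, filled_two_mul_eq_iff, ← add_assoc, ← add_assoc,
          add_right_comm R, add_right_comm R']
        exact_mod_cast h k (by omega) j (by omega)
      · simp only [← add_assoc, ← mul_add, filled_two_mul_add_one]
    · rfl

lemma downPattern_eq_iff (m : ℕ) {r e r' e' : ℕ} (he : 1 ≤ e) (he' : 1 ≤ e') :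
    downPattern m r (2 * e - 1) = downPattern m r' (2 * e' - 1) ↔
      rowWindow r e (m - 1) = rowWindow r' e' (m - 1) := by
  have column (e k t : ℕ) (he : 1 ≤ e) :
      2 * e - 1 + 2 * k + (2 * t + 1) = 2 * (e + (k + t)) := by
    omega
  rw [← pascal_downTriangle_eq_iff, funext_iff]
  constructor
  · intro h k x hkx hx
    have hkx' := h (k, 2 * (x - k) + 1)
    simp only [downPattern, if_pos (show k < m ∧ 2 * (x - k) + 1 ≤ 2 * (m - 1 - k) by omega),
      column e k _ he, column e' k _ he', filled_two_mul_eq_iff, Nat.add_sub_cancel' hkx] at hkx'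
    exact_mod_cast hkx'
  · rintro h ⟨k, c⟩
    simp only [downPattern]
    split_ifs with hkc
    · obtain ⟨t, rfl | rfl⟩ := Nat.even_or_odd' c
      · rw [show 2 * e - 1 + 2 * k + 2 * t = 2 * (e + k + t - 1) + 1 by omega,
          show 2 * e' - 1 + 2 * k + 2 * t = 2 * (e' + k + t - 1) + 1 by omega,
          filled_two_mul_add_one, filled_two_mul_add_one]
      · rw [column e k t he, column e' k t he', filled_two_mul_eq_iff]
        exact_mod_cast h k (k + t) (by omega) (by omega)
    · rfl

lemma ncard_image_eq_of_eq_iff {α β γ : Type*} {s : Set α} {f : α → β} {g : α → γ}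
    (h : ∀ a ∈ s, ∀ b ∈ s, f a = f b ↔ g a = g b) : (f '' s).ncard = (g '' s).ncard := by
  set F : α → β × γ := fun a => (f a, g a)
  have hfst : Set.InjOn Prod.fst (F '' s) := by
    rintro _ ⟨a, ha, rfl⟩ _ ⟨b, hb, rfl⟩ hab
    exact Prod.ext hab ((h a ha b hb).1 hab)
  have hsnd : Set.InjOn Prod.snd (F '' s) := by
    rintro _ ⟨a, ha, rfl⟩ _ ⟨b, hb, rfl⟩ hab
    exact Prod.ext ((h a ha b hb).2 hab) hab
  rw [← Set.image_image Prod.fst F, ← Set.image_image Prod.snd F, hfst.ncard_image,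
    hsnd.ncard_image]

lemma setOf_upPosition_eq_image {α : Type*} (f : ℕ → ℕ → α) :
    {p | ∃ r c : ℕ, c % 2 = 0 ∧ c ≤ 2 * r ∧ p = f r c} =
      (fun q : ℕ × ℕ => f q.1 (2 * q.2)) '' {q | q.2 ≤ q.1} := by
  ext p
  constructor
  · rintro ⟨r, c, hc, hcr, rfl⟩
    exact ⟨(r, c / 2), show c / 2 ≤ r by omega, by dsimp only; congr; omega⟩
  · rintro ⟨⟨r, j⟩, hj, rfl⟩
    exact ⟨r, 2 * j, by omega, by simpa using hj, rfl⟩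

lemma Pdown_eq_image (m : ℕ) :
    Pdown m = (fun q : ℕ × ℕ => downPattern m q.1 (2 * q.2 - 1)) ''
      {q | 1 ≤ q.2 ∧ q.2 + (m - 1) ≤ q.1} := by
  ext p
  constructor
  · rintro ⟨r, c, hc, hcr, rfl⟩
    exact ⟨(r, (c + 1) / 2), show 1 ≤ (c + 1) / 2 ∧ _ by omega, by dsimp only; congr; omega⟩
  · rintro ⟨⟨r, e⟩, ⟨he, her⟩, rfl⟩
    exact ⟨r, 2 * e - 1, by omega, by omega, rfl⟩

lemma ncard_Pdown (m : ℕ) : (Pdown m).ncard = (interiorWindows (m - 1)).ncard := by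
  rw [Pdown_eq_image, interiorWindows]
  exact ncard_image_eq_of_eq_iff fun q hq q' hq' => downPattern_eq_iff m hq.1 hq'.1

lemma ncard_Pup {n : ℕ} (hn : 1 ≤ n) :
    (Pup n).ncard = (interiorWindows (2 * n - 1)).ncard := by
  rw [Pup, setOf_upPosition_eq_image,
    ← image_rowWindow_eq_interiorWindows (n - 1) 0 (by omega)]
  simp only [add_zero]
  exact ncard_image_eq_of_eq_iff fun q _ q' _ => upPattern_eq_iff hn q.1 q.2 q'.1 q'.2

lemma ncard_PtopCut {n : ℕ} (hn : 2 ≤ n) :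
    (PtopCut n).ncard = (interiorWindows (2 * n - 2)).ncard := by
  rw [PtopCut, setOf_upPosition_eq_image,
    ← image_rowWindow_eq_interiorWindows (n - 2) 1 (by omega)]
  exact ncard_image_eq_of_eq_iff fun q _ q' _ => topCutPattern_eq_iff hn q.1 q.2 q'.1 q'.2

theorem sierpinski_down_up_connection (n : ℕ) (hn : 2 ≤ n) :
    (Pdown (2 * n)).ncard = (Pup n).ncard ∧
    (Pdown (2 * n - 1)).ncard = (PtopCut n).ncard := by
  rw [ncard_Pdown, ncard_Pdown, ncard_Pup (by omega), ncard_PtopCut hn,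
    show 2 * n - 1 - 1 = 2 * n - 2 by omega]
  exact ⟨rfl, rfl⟩
end

section
/- For every n ≥ 2, |P_up^{(0,0)}(n)| + |P_up^{(1,0)}(n)| + |P_up^{(1,2)}(n)| + |P_up^{(0,2)}(n)| = A_n + 6, where A_n = |P_up(n)| is the total number of upward patterns of size n occurring in T. -/
/-!
Write `T r j` for "`choose r j` is odd". By Lucas's theorem row `2s` of `T` is row `s` spread
onto the even columns, and row `2s + 1` is row `s` with every cell doubled. When one pattern
occurs at upward positions in two different residue classes these two descriptions clash: if the
rows have different parities only the two bottom corners can be filled, and not both; if the rows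
have the same parity (so the columns differ mod 4) only the apex can be filled. Hence a pattern
lying in two classes is blank or has a single filled corner. Explicit windows in the rows around
`2 ^ (n + 2)`, where `T` repeats its first `2 ^ (n + 2)` rows, show that the blank pattern lies
in all four classes and each single-corner pattern in exactly two, so the four class counts
exceed `A_n` by `3 + 1 + 1 + 1 = 6`.
-/

theorem Nat.odd_choose_iff_mod_two {n k : ℕ} :
    Odd (n.choose k) ↔ k % 2 ≤ n % 2 ∧ Odd ((n / 2).choose (k / 2)) := by
  have := Fact.mk Nat.prime_two
  have hL : n.choose k % 2 = (n % 2).choose (k % 2) * (n / 2).choose (k / 2) % 2 :=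
    Choose.choose_modEq_choose_mod_mul_choose_div_nat
  simp only [Nat.odd_iff, hL]
  rcases Nat.mod_two_eq_zero_or_one n with hn | hn <;>
    rcases Nat.mod_two_eq_zero_or_one k with hk | hk <;> simp [hn, hk]

theorem Nat.even_of_odd_choose {n k : ℕ} (hn : Even n) (h : Odd (n.choose k)) : Even k := by
  rw [Nat.odd_choose_iff_mod_two] at h
  grind

theorem Nat.odd_choose_succ_iff {n k : ℕ} (hn : Even n) :
    Odd ((n + 1).choose k) ↔ Odd (n.choose (2 * (k / 2))) := by
  rw [Nat.odd_choose_iff_mod_two, Nat.odd_choose_iff_mod_two (n := n)]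
  have h1 : (n + 1) / 2 = n / 2 := by grind
  have h2 : k % 2 ≤ (n + 1) % 2 := by grind
  simp [h1, h2]

theorem Nat.odd_choose_two_pow_mul_add {m t j : ℕ} (n k : ℕ) (ht : t < 2 ^ m) (hj : j < 2 ^ m) :
    Odd ((2 ^ m * n + t).choose (2 ^ m * k + j)) ↔ Odd (n.choose k) ∧ Odd (t.choose j) := by
  induction m generalizing t j with
  | zero => simp_all
  | succ m ih =>
    rw [pow_succ'] at ht hj ⊢
    rw [Nat.odd_choose_iff_mod_two, Nat.odd_choose_iff_mod_two (n := t), mul_assoc, mul_assoc]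
    have e1 : (2 * (2 ^ m * n) + t) / 2 = 2 ^ m * n + t / 2 := by omega
    have e2 : (2 * (2 ^ m * k) + j) / 2 = 2 ^ m * k + j / 2 := by omega
    simp only [e1, e2, Nat.mul_add_mod, ih (by omega : t / 2 < 2 ^ m) (by omega : j / 2 < 2 ^ m)]
    tauto

theorem Nat.odd_choose_two_pow_sub_one {m k : ℕ} (hk : k < 2 ^ m) :
    Odd ((2 ^ m - 1).choose k) := by
  induction m generalizing k with
  | zero => simp_all
  | succ m ih =>
    rw [Nat.odd_choose_iff_mod_two]
    have h1 : 1 ≤ 2 ^ m := Nat.one_le_two_pow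
    rw [pow_succ] at hk ⊢
    exact ⟨by omega, by convert ih (k := k / 2) (by omega) using 2; omega⟩

theorem Nat.succ_mod_two_eq_of_odd_choose_succ {n k : ℕ} (h : Odd ((n + 1).choose k))
    (h' : ¬Odd (n.choose k)) : (n + 1) % 2 = k % 2 := by
  rcases Nat.even_or_odd n with hn | hn
  · rw [Nat.odd_choose_succ_iff hn] at h
    have : k % 2 = 1 := by
      by_contra hk
      exact h' (by rwa [show 2 * (k / 2) = k by omega] at h)
    grind
  · have := Nat.even_of_odd_choose (by grind) h
    grind

theorem Nat.even_succ_of_odd_choose_succ_succ {n k : ℕ} (h : Odd ((n + 1).choose (k + 1)))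
    (h' : ¬Odd (n.choose k)) : Even (k + 1) := by
  rcases Nat.even_or_odd n with hn | hn
  · rw [Nat.odd_choose_succ_iff hn] at h
    by_contra hk
    exact h' (by rwa [show 2 * ((k + 1) / 2) = k by grind] at h)
  · exact Nat.even_of_odd_choose (by grind) h

theorem Nat.odd_choose_two_pow_add_iff {m t j : ℕ} (ht : t < 2 ^ m) (hj : j < 2 ^ m) :
    Odd ((2 ^ m + t).choose j) ↔ Odd (t.choose j) := by
  simpa using Nat.odd_choose_two_pow_mul_add 1 0 ht hj

theorem Nat.odd_choose_two_pow_add_two_pow_add_iff {m t j : ℕ} (ht : t < 2 ^ m)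
    (hj : j < 2 ^ m) : Odd ((2 ^ m + t).choose (2 ^ m + j)) ↔ Odd (t.choose j) := by
  simpa using Nat.odd_choose_two_pow_mul_add 1 1 ht hj

open Classical Finset in
theorem sum_ncard_eq_sum_card_filter_mem {ι α : Type*} (I : Finset ι) (F : Finset α)
    (X : ι → Set α) (hX : ∀ i ∈ I, X i ⊆ F) :
    ∑ i ∈ I, (X i).ncard = ∑ p ∈ F, #{i ∈ I | p ∈ X i} := by
  calc ∑ i ∈ I, (X i).ncard = ∑ i ∈ I, #{p ∈ F | p ∈ X i} := by
        refine Finset.sum_congr rfl fun i hi => ?_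
        rw [← Set.ncard_coe_finset, Finset.coe_filter]
        congr 1
        ext p
        exact ⟨fun hp => ⟨hX i hi hp, hp⟩, And.right⟩
    _ = ∑ p ∈ F, #{i ∈ I | p ∈ X i} :=
        Finset.sum_card_bipartiteAbove_eq_sum_card_bipartiteBelow (fun i p => p ∈ X i)

open Finset in
theorem sum_eq_card_add_sum_sub_one {α : Type*} {F S : Finset α} {f : α → ℕ} (hS : S ⊆ F)
    (hpos : ∀ p ∈ F, 0 < f p) (hone : ∀ p ∈ F, p ∉ S → f p = 1) :
    ∑ p ∈ F, f p = #F + ∑ p ∈ S, (f p - 1) := by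
  calc ∑ p ∈ F, f p = ∑ p ∈ F, (1 + (f p - 1)) :=
        Finset.sum_congr rfl fun p hp => by have := hpos p hp; omega
    _ = #F + ∑ p ∈ F, (f p - 1) := by rw [Finset.sum_add_distrib, Finset.card_eq_sum_ones]
    _ = #F + ∑ p ∈ S, (f p - 1) := by
        rw [Finset.sum_subset hS fun p hp hpS => by simp [hone p hp hpS]]

/-- The upward windows of size `n` with apexes `(r, 2a)` and `(r', 2a')` carry the same
pattern. -/
def SameUpWindow (n r a r' a' : ℕ) : Prop :=
  ∀ k b, k < n → b ≤ k → (Odd ((r + k).choose (a + b)) ↔ Odd ((r' + k).choose (a' + b)))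

namespace SameUpWindow

variable {n r a r' a' : ℕ}

theorem symm (h : SameUpWindow n r a r' a') : SameUpWindow n r' a' r a :=
  fun k b hk hb => (h k b hk hb).symm

/-- On the side whose row is even, filled cells have even columns. -/
theorem not_adjacent (h : SameUpWindow n r a r' a') {k b : ℕ} (hk : k < n) (hb : b + 1 ≤ k)
    (hpar : (r + k) % 2 ≠ (r' + k) % 2) :
    ¬(Odd ((r + k).choose (a + b)) ∧ Odd ((r + k).choose (a + b + 1))) := by
  wlog hR : Even (r + k) generalizing r a r' a'
  · rintro ⟨h1, h2⟩
    exact this h.symm hpar.symm (by grind)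
      ⟨(h k b hk (by omega)).mp h1, (h k (b + 1) hk hb).mp h2⟩
  rintro ⟨h1, h2⟩
  have e1 := Nat.even_of_odd_choose hR h1
  have e2 := Nat.even_of_odd_choose hR h2
  grind

/-- A filled cell in an even row has both children filled, and they are adjacent. -/
theorem not_odd_choose_of_row_parity_ne (h : SameUpWindow n r a r' a') (hr : r % 2 ≠ r' % 2)
    {k b : ℕ} (hk : k + 1 < n) (hb : b ≤ k) : ¬Odd ((r + k).choose (a + b)) := by
  wlog hR : Even (r + k) generalizing r a r' a'
  · exact fun h1 => this h.symm hr.symm (by grind) ((h k b (by omega) hb).mp h1)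
  intro h1
  have hA := Nat.even_of_odd_choose hR h1
  refine h.not_adjacent (k := k + 1) (b := b) hk (by omega) (by omega) ⟨?_, ?_⟩
  · rw [← add_assoc, Nat.odd_choose_succ_iff hR, show 2 * ((a + b) / 2) = a + b by grind]
    exact h1
  · rw [← add_assoc, Nat.odd_choose_succ_iff hR, show 2 * ((a + b + 1) / 2) = a + b by grind]
    exact h1

/-- A filled cell in an odd row has a filled horizontal neighbour. -/
theorem not_odd_choose_bottom_of_row_parity_ne (h : SameUpWindow n r a r' a')
    (hr : r % 2 ≠ r' % 2) {b : ℕ} (hb₀ : 0 < b) (hb : b + 1 < n) :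
    ¬Odd ((r + (n - 1)).choose (a + b)) := by
  wlog hR : Odd (r + (n - 1)) generalizing r a r' a'
  · exact fun h1 => this h.symm hr.symm (by grind) ((h (n - 1) b (by omega) (by omega)).mp h1)
  obtain ⟨R, hR⟩ : ∃ R, Even R ∧ r + (n - 1) = R + 1 := ⟨r + (n - 1) - 1, by grind, by grind⟩
  intro h1
  have partner : ∀ c, c / 2 = (a + b) / 2 → Odd ((r + (n - 1)).choose c) := fun c hc => by
    rwa [hR.2, Nat.odd_choose_succ_iff hR.1, hc, ← Nat.odd_choose_succ_iff hR.1, ← hR.2]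
  rcases Nat.even_or_odd (a + b) with hA | hA
  · exact h.not_adjacent (b := b) (by omega) (by omega) (by omega) ⟨h1, partner _ (by grind)⟩
  · exact h.not_adjacent (b := b - 1) (by omega) (by omega) (by omega)
      ⟨partner _ (by grind), partner _ (by grind)⟩

theorem eq_bottom_corner_of_row_parity_ne (h : SameUpWindow n r a r' a') (hr : r % 2 ≠ r' % 2)
    {k b : ℕ} (hk : k < n) (hb : b ≤ k) (h1 : Odd ((r + k).choose (a + b))) :
    k = n - 1 ∧ (b = 0 ∨ b = n - 1) := by
  by_contra hc
  rcases (by omega : k + 1 < n ∨ (k = n - 1 ∧ 0 < b ∧ b + 1 < n)) with hk' | ⟨rfl, hb₀, hb'⟩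
  · exact h.not_odd_choose_of_row_parity_ne hr hk' hb h1
  · exact h.not_odd_choose_bottom_of_row_parity_ne hr hb₀ hb' h1

/-- Each filled bottom corner fixes a parity relation between its row and column (the cell
above it being empty); the four relations together would force `r ≡ r' (mod 2)`. -/
theorem not_odd_choose_both_bottom_corners (h : SameUpWindow n r a r' a') (hn : 2 ≤ n)
    (hr : r % 2 ≠ r' % 2) :
    ¬(Odd ((r + (n - 1)).choose a) ∧ Odd ((r + (n - 1)).choose (a + (n - 1)))) := by
  rintro ⟨hbl, hbr⟩
  have hrow : r + (n - 1) = r + (n - 2) + 1 := by omega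
  have hrow' : r' + (n - 1) = r' + (n - 2) + 1 := by omega
  have hcol : a + (n - 1) = a + (n - 2) + 1 := by omega
  have hcol' : a' + (n - 1) = a' + (n - 2) + 1 := by omega
  have empty : ∀ b, b ≤ n - 2 → ¬Odd ((r + (n - 2)).choose (a + b)) ∧
      ¬Odd ((r' + (n - 2)).choose (a' + b)) := fun b hb =>
    ⟨h.not_odd_choose_of_row_parity_ne hr (by omega) hb,
      h.symm.not_odd_choose_of_row_parity_ne hr.symm (by omega) hb⟩
  have hbl' := (h (n - 1) 0 (by omega) (by omega)).mp hbl
  have hbr' := (h (n - 1) (n - 1) (by omega) le_rfl).mp hbr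
  rw [hrow] at hbl hbr
  rw [hrow'] at hbl' hbr'
  rw [hcol] at hbr
  rw [hcol'] at hbr'
  have p1 := Nat.succ_mod_two_eq_of_odd_choose_succ hbl (by simpa using (empty 0 (by omega)).1)
  have p2 := Nat.succ_mod_two_eq_of_odd_choose_succ hbl' (by simpa using (empty 0 (by omega)).2)
  have p3 := Nat.even_succ_of_odd_choose_succ_succ hbr (empty (n - 2) le_rfl).1
  have p4 := Nat.even_succ_of_odd_choose_succ_succ hbr' (empty (n - 2) le_rfl).2
  grind

/-- Even rows are empty (a filled cell there would have a column of both parities); a filled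
cell below the apex in an odd row has a filled parent, on one of the two sides, inside the
window. -/
theorem eq_apex_of_col_parity_ne (h : SameUpWindow n r a r' a') (hr : r % 2 = r' % 2)
    (ha : a % 2 ≠ a' % 2) {k b : ℕ} (hk : k < n) (hb : b ≤ k)
    (h1 : Odd ((r + k).choose (a + b))) : k = 0 := by
  have even_empty : ∀ k b, k < n → b ≤ k → Even (r + k) → ¬Odd ((r + k).choose (a + b)) := by
    intro k b hk hb hR h1
    have e1 := Nat.even_of_odd_choose hR h1
    have e2 := Nat.even_of_odd_choose (by grind) ((h k b hk hb).mp h1)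
    grind
  by_contra hk₀
  have hR : Even (r + (k - 1)) := by
    by_contra hR
    exact even_empty k b hk hb (by grind) h1
  have hrow : r + k = r + (k - 1) + 1 := by omega
  have hrow' : r' + k = r' + (k - 1) + 1 := by omega
  have h2 := (h k b hk hb).mp h1
  rw [hrow, Nat.odd_choose_succ_iff hR] at h1
  rw [hrow', Nat.odd_choose_succ_iff (by grind)] at h2
  rcases (by omega : (a ≤ 2 * ((a + b) / 2) ∧ 2 * ((a + b) / 2) ≤ a + (k - 1)) ∨
      (a' ≤ 2 * ((a' + b) / 2) ∧ 2 * ((a' + b) / 2) ≤ a' + (k - 1))) with hc | hc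
  · refine even_empty (k - 1) (2 * ((a + b) / 2) - a) (by omega) (by omega) hR ?_
    rwa [Nat.add_sub_cancel' hc.1]
  · refine even_empty (k - 1) (2 * ((a' + b) / 2) - a') (by omega) (by omega) hR ?_
    rw [h (k - 1) _ (by omega) (by omega), Nat.add_sub_cancel' hc.1]
    exact h2

end SameUpWindow

theorem upPattern_two_mul_apply_eq_true {n r a k m : ℕ} :
    upPattern n r (2 * a) (k, m) = true ↔
      k < n ∧ m ≤ 2 * k ∧ m % 2 = 0 ∧ Odd ((r + k).choose (a + m / 2)) := by
  simp only [upPattern, filled, Nat.odd_iff]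
  split_ifs with hw
  · simp only [decide_eq_true_eq]
    grind
  · simp only [false_iff]
    grind

theorem odd_choose_iff_of_upPattern_eq {n r a k b : ℕ} {p : ℕ × ℕ → Bool}
    (h : upPattern n r (2 * a) = p) (hk : k < n) (hb : b ≤ k) :
    Odd ((r + k).choose (a + b)) ↔ p (k, 2 * b) = true := by
  rw [← h, upPattern_two_mul_apply_eq_true]
  simp [hk, hb]

theorem sameUpWindow_of_upPattern_eq {n r a r' a' : ℕ}
    (h : upPattern n r (2 * a) = upPattern n r' (2 * a')) : SameUpWindow n r a r' a' :=
  fun _ _ hk hb => (odd_choose_iff_of_upPattern_eq h hk hb).trans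
    (odd_choose_iff_of_upPattern_eq rfl hk hb).symm

theorem upPattern_eq_blankUp {n r a : ℕ}
    (h : ∀ k b, k < n → b ≤ k → ¬Odd ((r + k).choose (a + b))) :
    upPattern n r (2 * a) = blankUp := by
  funext ⟨k, m⟩
  rw [blankUp, Bool.eq_false_iff, ne_eq, upPattern_two_mul_apply_eq_true]
  exact fun ⟨hk, hm, _, hodd⟩ => h k (m / 2) hk (by omega) hodd

theorem upPattern_eq_cell {n r a k₀ b₀ : ℕ} (hk₀ : k₀ < n) (hb₀ : b₀ ≤ k₀)
    (h : ∀ k b, k < n → b ≤ k → (Odd ((r + k).choose (a + b)) ↔ k = k₀ ∧ b = b₀)) :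
    upPattern n r (2 * a) = fun q => decide (q = (k₀, 2 * b₀)) := by
  funext ⟨k, m⟩
  rw [Bool.eq_iff_iff, upPattern_two_mul_apply_eq_true, decide_eq_true_iff, Prod.mk.injEq]
  constructor
  · rintro ⟨hk, hm, hm2, hodd⟩
    grind
  · rintro ⟨rfl, rfl⟩
    refine ⟨hk₀, by omega, by omega, ?_⟩
    rw [Nat.mul_div_cancel_left _ two_pos]
    exact (h _ _ hk₀ hb₀).mpr ⟨rfl, rfl⟩

theorem upPattern_eq_blankUp_or_cell {n r a k₀ b₀ : ℕ} (hk₀ : k₀ < n) (hb₀ : b₀ ≤ k₀)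
    (h : ∀ k b, k < n → b ≤ k → Odd ((r + k).choose (a + b)) → k = k₀ ∧ b = b₀) :
    upPattern n r (2 * a) = blankUp ∨
      upPattern n r (2 * a) = fun q => decide (q = (k₀, 2 * b₀)) := by
  by_cases h₀ : Odd ((r + k₀).choose (a + b₀))
  · refine .inr (upPattern_eq_cell hk₀ hb₀ fun k b hk hb => ⟨h k b hk hb, ?_⟩)
    rintro ⟨rfl, rfl⟩
    exact h₀
  · refine .inl (upPattern_eq_blankUp fun k b hk hb hodd => h₀ ?_)
    obtain ⟨rfl, rfl⟩ := h k b hk hb hodd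
    exact hodd

theorem exists_of_mem_PupRC {n ρ γ : ℕ} {p : ℕ × ℕ → Bool} (h : p ∈ PupRC n ρ γ) :
    ∃ r a, a ≤ r ∧ r % 2 = ρ ∧ 2 * (a % 2) = γ ∧ upPattern n r (2 * a) = p := by
  obtain ⟨r, c, hc, hcr, hr, hc4, rfl⟩ := h
  exact ⟨r, c / 2, by omega, hr, by omega, by rw [Nat.mul_div_cancel' (by omega)]⟩

theorem mem_PupRC_of_upPattern_eq {n ρ γ r a : ℕ} {p : ℕ × ℕ → Bool} (har : a ≤ r)
    (hr : r % 2 = ρ) (ha : 2 * (a % 2) = γ) (h : upPattern n r (2 * a) = p) :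
    p ∈ PupRC n ρ γ :=
  ⟨r, 2 * a, by omega, by omega, hr, by omega, h.symm⟩

theorem four_mul_add_four_le_two_pow (n : ℕ) : 4 * n + 4 ≤ 2 ^ (n + 2) := by
  have := Nat.lt_two_pow_self (n := n)
  rw [pow_add]
  omega

theorem blankUp_mem_PupRC {n ρ γ : ℕ} (hρ : ρ < 2) (hγ : γ = 0 ∨ γ = 2) :
    blankUp ∈ PupRC n ρ γ := by
  have hM := four_mul_add_four_le_two_pow n
  refine mem_PupRC_of_upPattern_eq (r := 2 ^ (n + 2) + ρ) (a := ρ + n + (ρ + n + γ / 2) % 2)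
    (by omega) (by rw [pow_succ]; omega) (by omega)
    (upPattern_eq_blankUp fun k b hk hb => ?_)
  rw [add_assoc, Nat.odd_choose_two_pow_add_iff (by omega) (by omega),
    Nat.choose_eq_zero_of_lt (by omega)]
  exact Nat.not_odd_zero

theorem topUp_mem_PupRC_iff {n ρ γ : ℕ} (hn : 2 ≤ n) (hγ : γ = 0 ∨ γ = 2) :
    topUp ∈ PupRC n ρ γ ↔ ρ = 1 := by
  constructor
  · intro h
    obtain ⟨r, a, -, rfl, -, hp⟩ := exists_of_mem_PupRC h
    have h0 := (odd_choose_iff_of_upPattern_eq hp (k := 0) (b := 0) (by omega) le_rfl).mpr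
      (by simp [topUp])
    have h1 := (odd_choose_iff_of_upPattern_eq hp (k := 1) (b := 0) (by omega) (by omega)).not.mpr
      (by simp [topUp])
    by_contra hr
    have hre : Even r := Nat.even_iff.mpr (by omega)
    simp only [add_zero] at h0 h1
    rw [Nat.odd_choose_succ_iff hre,
      Nat.two_mul_div_two_of_even (Nat.even_of_odd_choose hre h0)] at h1
    exact h1 h0
  · rintro rfl
    have hM := four_mul_add_four_le_two_pow n
    refine mem_PupRC_of_upPattern_eq (r := 2 ^ (n + 2) - 1) (a := n + (n + γ / 2) % 2)
      (by omega) ?_ (by omega) (upPattern_eq_cell (k₀ := 0) (b₀ := 0) (by omega) le_rfl ?_)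
    · rw [pow_succ] at hM ⊢
      omega
    rintro (_ | k) b hk hb
    · exact iff_of_true (Nat.odd_choose_two_pow_sub_one (by omega)) ⟨rfl, by omega⟩
    · refine iff_of_false ?_ (by omega)
      rw [show 2 ^ (n + 2) - 1 + (k + 1) = 2 ^ (n + 2) + k by omega,
        Nat.odd_choose_two_pow_add_iff (by omega) (by omega), Nat.choose_eq_zero_of_lt (by omega)]
      exact Nat.not_odd_zero

theorem botleftUp_mem_PupRC_iff {n ρ γ : ℕ} (hn : 2 ≤ n) (hρ : ρ < 2) :
    botleftUp n ∈ PupRC n ρ γ ↔ γ = 2 * ((ρ + n + 1) % 2) := by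
  constructor
  · intro h
    obtain ⟨r, a, -, rfl, rfl, hp⟩ := exists_of_mem_PupRC h
    have h0 := (odd_choose_iff_of_upPattern_eq hp (k := n - 1) (b := 0) (by omega) (by omega)).mpr
      (by simp [botleftUp])
    have h1 := (odd_choose_iff_of_upPattern_eq hp (k := n - 2) (b := 0) (by omega)
      (by omega)).not.mpr (by grind [botleftUp])
    rw [add_zero, show r + (n - 1) = r + (n - 2) + 1 by omega] at h0
    have := Nat.succ_mod_two_eq_of_odd_choose_succ h0 (by simpa using h1)
    omega
  · intro hγ'
    have hM := four_mul_add_four_le_two_pow n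
    refine mem_PupRC_of_upPattern_eq (r := 2 ^ (n + 2) + ρ) (a := ρ + n - 1)
      (by omega) (by rw [pow_succ]; omega) (by omega)
      (upPattern_eq_cell (k₀ := n - 1) (b₀ := 0) (by omega) (by omega) fun k b hk hb => ?_)
    rw [add_assoc, Nat.odd_choose_two_pow_add_iff (by omega) (by omega)]
    by_cases hc : k = n - 1 ∧ b = 0
    · refine iff_of_true ?_ hc
      rw [show ρ + n - 1 + b = ρ + k by omega, Nat.choose_self]
      exact odd_one
    · refine iff_of_false ?_ hc
      rw [Nat.choose_eq_zero_of_lt (by omega)]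
      exact Nat.not_odd_zero

theorem botrightUp_mem_PupRC_iff {n ρ γ : ℕ} (hn : 2 ≤ n) (hρ : ρ < 2) :
    botrightUp n ∈ PupRC n ρ γ ↔ γ = 2 * ((n + 1) % 2) := by
  constructor
  · intro h
    obtain ⟨r, a, -, rfl, rfl, hp⟩ := exists_of_mem_PupRC h
    have h0 := (odd_choose_iff_of_upPattern_eq hp (k := n - 1) (b := n - 1) (by omega)
      le_rfl).mpr (by simp [botrightUp])
    have h1 := (odd_choose_iff_of_upPattern_eq hp (k := n - 2) (b := n - 2) (by omega)
      le_rfl).not.mpr (by grind [botrightUp])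
    rw [show r + (n - 1) = r + (n - 2) + 1 by omega,
      show a + (n - 1) = a + (n - 2) + 1 by omega] at h0
    have := Nat.even_succ_of_odd_choose_succ_succ h0 h1
    grind
  · intro hγ'
    have hM := four_mul_add_four_le_two_pow n
    -- the corner lies on the left edge of the right-hand copy of `T` in rows `≥ 2 ^ (n + 2)`,
    -- the rest of the window in the empty gap to its left
    refine mem_PupRC_of_upPattern_eq (r := 2 ^ (n + 2) + ρ) (a := 2 ^ (n + 2) - (n - 1))
      (by omega) (by rw [pow_succ]; omega) (by rw [pow_succ] at hM ⊢; omega)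
      (upPattern_eq_cell (k₀ := n - 1) (b₀ := n - 1) (by omega) le_rfl fun k b hk hb => ?_)
    rw [add_assoc]
    by_cases hc : k = n - 1 ∧ b = n - 1
    · refine iff_of_true ?_ hc
      rw [show 2 ^ (n + 2) - (n - 1) + b = 2 ^ (n + 2) + 0 by omega,
        Nat.odd_choose_two_pow_add_two_pow_add_iff (by omega) (by omega), Nat.choose_zero_right]
      exact odd_one
    · refine iff_of_false ?_ hc
      rw [Nat.odd_choose_two_pow_add_iff (by omega) (by omega),
        Nat.choose_eq_zero_of_lt (by omega)]
      exact Nat.not_odd_zero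

open Classical in
noncomputable def specialUp (n : ℕ) : Finset (ℕ × ℕ → Bool) :=
  {blankUp, topUp, botleftUp n, botrightUp n}

theorem mem_specialUp_of_mem_two_PupRC {n ρ γ ρ' γ' : ℕ} {p : ℕ × ℕ → Bool} (hn : 2 ≤ n)
    (h : p ∈ PupRC n ρ γ) (h' : p ∈ PupRC n ρ' γ') (hne : (ρ, γ) ≠ (ρ', γ')) :
    p ∈ specialUp n := by
  obtain ⟨r, a, -, rfl, rfl, rfl⟩ := exists_of_mem_PupRC h
  obtain ⟨r', a', -, rfl, rfl, hp⟩ := exists_of_mem_PupRC h'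
  have hs := sameUpWindow_of_upPattern_eq hp.symm
  simp only [specialUp, Finset.mem_insert, Finset.mem_singleton]
  by_cases hr : r % 2 = r' % 2
  · have ha : a % 2 ≠ a' % 2 := by grind
    have := upPattern_eq_blankUp_or_cell (n := n) (k₀ := 0) (b₀ := 0) (by omega) le_rfl
      fun k b hk hb hodd => by have := hs.eq_apex_of_col_parity_ne hr ha hk hb hodd; omega
    tauto
  · have corner : ∀ b₀, (b₀ = 0 ∨ b₀ = n - 1) → ¬Odd ((r + (n - 1)).choose (a + b₀)) →
        ∀ k b, k < n → b ≤ k → Odd ((r + k).choose (a + b)) → k = n - 1 ∧ b = n - 1 - b₀ := by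
      intro b₀ hb₀ hempty k b hk hb hodd
      obtain ⟨rfl, hb'⟩ := hs.eq_bottom_corner_of_row_parity_ne hr hk hb hodd
      refine ⟨rfl, ?_⟩
      by_contra hne
      exact hempty (by convert hodd using 3; omega)
    by_cases hl : Odd ((r + (n - 1)).choose (a + 0))
    · have hbr : ¬Odd ((r + (n - 1)).choose (a + (n - 1))) := fun hbr =>
        hs.not_odd_choose_both_bottom_corners hn hr ⟨hl, hbr⟩
      have := upPattern_eq_blankUp_or_cell (by omega) (by omega) (corner (n - 1) (.inr rfl) hbr)
      simp only [Nat.sub_self, mul_zero] at this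
      tauto
    · have := upPattern_eq_blankUp_or_cell (by omega) (by omega) (corner 0 (.inl rfl) hl)
      simp only [Nat.sub_zero] at this
      tauto

theorem blankUp_ne_topUp : blankUp ≠ topUp := fun h => by
  simpa [blankUp, topUp] using congrFun h (0, 0)

theorem blankUp_ne_botleftUp (n : ℕ) : blankUp ≠ botleftUp n := fun h => by
  simpa [blankUp, botleftUp] using congrFun h (n - 1, 0)

theorem blankUp_ne_botrightUp (n : ℕ) : blankUp ≠ botrightUp n := fun h => by
  simpa [blankUp, botrightUp] using congrFun h (n - 1, 2 * (n - 1))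

theorem topUp_ne_botleftUp {n : ℕ} (hn : 2 ≤ n) : topUp ≠ botleftUp n := fun h => by
  have := congrFun h (0, 0)
  grind [topUp, botleftUp]

theorem topUp_ne_botrightUp {n : ℕ} (hn : 2 ≤ n) : topUp ≠ botrightUp n := fun h => by
  have := congrFun h (0, 0)
  grind [topUp, botrightUp]

theorem botleftUp_ne_botrightUp {n : ℕ} (hn : 2 ≤ n) : botleftUp n ≠ botrightUp n := fun h => by
  have := congrFun h (n - 1, 0)
  grind [botleftUp, botrightUp]

theorem PupRC_subset_Pup (n ρ γ : ℕ) : PupRC n ρ γ ⊆ Pup n :=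
  fun _ ⟨r, c, hc, hcr, _, _, hp⟩ => ⟨r, c, hc, hcr, hp⟩

theorem Pup_finite (n : ℕ) : (Pup n).Finite := by
  refine Set.Finite.of_finite_image (f := fun p (q : Fin n × Fin (2 * n)) => p (q.1, q.2))
    (Set.toFinite _) fun p hp p' hp' heq => funext fun ⟨k, m⟩ => ?_
  obtain ⟨r, c, -, -, rfl⟩ := hp
  obtain ⟨r', c', -, -, rfl⟩ := hp'
  by_cases hw : k < n ∧ m ≤ 2 * k
  · simpa using congrFun heq (⟨k, hw.1⟩, ⟨m, by omega⟩)
  · simp [upPattern, hw]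

def residueClasses : Finset (ℕ × ℕ) := {(0, 0), (1, 0), (1, 2), (0, 2)}

theorem mem_residueClasses {i : ℕ × ℕ} : i ∈ residueClasses ↔ i.1 < 2 ∧ (i.2 = 0 ∨ i.2 = 2) := by
  obtain ⟨ρ, γ⟩ := i
  simp only [residueClasses, Finset.mem_insert, Finset.mem_singleton, Prod.mk.injEq]
  omega

open Classical Finset in
noncomputable def classMultiplicity (n : ℕ) (p : ℕ × ℕ → Bool) : ℕ :=
  #{i ∈ residueClasses | p ∈ PupRC n i.1 i.2}

theorem classMultiplicity_pos {n : ℕ} {p : ℕ × ℕ → Bool} (hp : p ∈ Pup n) :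
    0 < classMultiplicity n p := by
  obtain ⟨r, c, hc, hcr, rfl⟩ := hp
  classical
  exact Finset.card_pos.mpr ⟨(r % 2, c % 4), Finset.mem_filter.mpr
    ⟨mem_residueClasses.mpr ⟨by omega, by omega⟩, r, c, hc, hcr, rfl, rfl, rfl⟩⟩

theorem classMultiplicity_eq_one {n : ℕ} (hn : 2 ≤ n) {p : ℕ × ℕ → Bool} (hp : p ∈ Pup n)
    (hs : p ∉ specialUp n) : classMultiplicity n p = 1 := by
  classical
  refine le_antisymm (Finset.card_le_one.mpr fun i hi j hj => ?_) (classMultiplicity_pos hp)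
  rw [Finset.mem_filter] at hi hj
  by_contra hij
  exact hs (mem_specialUp_of_mem_two_PupRC hn hi.2 hj.2 hij)

theorem classMultiplicity_blankUp (n : ℕ) : classMultiplicity n blankUp = 4 := by
  classical
  unfold classMultiplicity
  rw [Finset.filter_true_of_mem fun i hi =>
    blankUp_mem_PupRC (mem_residueClasses.mp hi).1 (mem_residueClasses.mp hi).2]
  rfl

theorem classMultiplicity_topUp {n : ℕ} (hn : 2 ≤ n) : classMultiplicity n topUp = 2 := by
  classical
  unfold classMultiplicity
  rw [Finset.filter_congr fun i hi => topUp_mem_PupRC_iff hn (mem_residueClasses.mp hi).2]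
  decide

theorem classMultiplicity_botleftUp {n : ℕ} (hn : 2 ≤ n) :
    classMultiplicity n (botleftUp n) = 2 := by
  classical
  unfold classMultiplicity
  rw [Finset.filter_congr fun i hi =>
    (botleftUp_mem_PupRC_iff hn (mem_residueClasses.mp hi).1).trans
      (show _ ↔ i.2 = 2 * ((i.1 + n % 2 + 1) % 2) by omega)]
  have := Nat.mod_lt n two_pos
  generalize n % 2 = e at *
  interval_cases e <;> decide

theorem classMultiplicity_botrightUp {n : ℕ} (hn : 2 ≤ n) :
    classMultiplicity n (botrightUp n) = 2 := by
  classical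
  unfold classMultiplicity
  rw [Finset.filter_congr fun i hi =>
    (botrightUp_mem_PupRC_iff hn (mem_residueClasses.mp hi).1).trans
      (show _ ↔ i.2 = 2 * ((n % 2 + 1) % 2) by omega)]
  have := Nat.mod_lt n two_pos
  generalize n % 2 = e at *
  interval_cases e <;> decide

theorem sum_specialUp_classMultiplicity_sub_one {n : ℕ} (hn : 2 ≤ n) :
    ∑ p ∈ specialUp n, (classMultiplicity n p - 1) = 6 := by
  classical
  rw [specialUp, Finset.sum_insert (by simp [blankUp_ne_topUp, blankUp_ne_botleftUp,
      blankUp_ne_botrightUp]),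
    Finset.sum_insert (by simp [topUp_ne_botleftUp hn, topUp_ne_botrightUp hn]),
    Finset.sum_pair (botleftUp_ne_botrightUp hn), classMultiplicity_blankUp,
    classMultiplicity_topUp hn, classMultiplicity_botleftUp hn, classMultiplicity_botrightUp hn]
  rfl

theorem specialUp_subset_Pup {n : ℕ} (hn : 2 ≤ n) :
    (specialUp n : Set (ℕ × ℕ → Bool)) ⊆ Pup n := by
  classical
  intro p hp
  have hpos : 0 < classMultiplicity n p := by
    simp only [specialUp, Finset.coe_insert, Finset.coe_singleton, Set.mem_insert_iff,
      Set.mem_singleton_iff] at hp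
    rcases hp with rfl | rfl | rfl | rfl <;>
      simp [classMultiplicity_blankUp, classMultiplicity_topUp hn, classMultiplicity_botleftUp hn,
        classMultiplicity_botrightUp hn]
  obtain ⟨i, hi⟩ := Finset.card_pos.mp hpos
  exact PupRC_subset_Pup n i.1 i.2 (Finset.mem_filter.mp hi).2

theorem sierpinski_up_additivity (n : ℕ) (hn : 2 ≤ n) :
    (PupRC n 0 0).ncard + (PupRC n 1 0).ncard + (PupRC n 1 2).ncard + (PupRC n 0 2).ncard
      = (Pup n).ncard + 6 := by
  classical
  have hF := Pup_finite n
  calc (PupRC n 0 0).ncard + (PupRC n 1 0).ncard + (PupRC n 1 2).ncard + (PupRC n 0 2).ncard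
      = ∑ i ∈ residueClasses, (PupRC n i.1 i.2).ncard := by
        rw [residueClasses, Finset.sum_insert (by decide), Finset.sum_insert (by decide),
          Finset.sum_pair (by decide)]
        ring
    _ = ∑ p ∈ hF.toFinset, classMultiplicity n p :=
        sum_ncard_eq_sum_card_filter_mem _ _ _ fun i _ => by
          simpa using PupRC_subset_Pup n i.1 i.2
    _ = hF.toFinset.card + ∑ p ∈ specialUp n, (classMultiplicity n p - 1) :=
        sum_eq_card_add_sum_sub_one (by simpa using specialUp_subset_Pup hn)
          (fun p hp => classMultiplicity_pos (by simpa using hp))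
          (fun p hp hs => classMultiplicity_eq_one hn (by simpa using hp) hs)
    _ = (Pup n).ncard + 6 := by
        rw [sum_specialUp_classMultiplicity_sub_one hn, Set.ncard_eq_toFinset_card _ hF]
end
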